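/- arXiv:2009.02125 — 2 statements merged into one kernel-verified Lean document; each statement's English description precedes it below -/
import Mathlib

section
/- Let u, v, w ∈ S_n with v ≤ u ≤ w in Bruhat order and let r be such that s_r ∉ supp(w). Then T̄(s_r u,[v, s_r w]) = T̄(u,[v,w]) and T̲(s_r u,[v, s_r w]) = T̲(u,[v,w]) ∪ {(u^{-1}(r), u^{-1}(r+1))}. -/
/-- `simpleT n i` is the adjacent transposition `sᵢ = (i, i+1)` (one-indexed values),
acting on `{1, …, n}` represented (zero-indexed) by `Fin n`.  It is the identity
permutation when `i` is outside the valid range `1 ≤ i ≤ n - 1`. -/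
def simpleT (n : ℕ) (i : ℕ) : Equiv.Perm (Fin n) :=
  if h : 1 ≤ i ∧ i < n then Equiv.swap ⟨i - 1, by omega⟩ ⟨i, h.2⟩ else 1

/-- The (Coxeter) length `ℓ(w)`: the minimal number of adjacent transpositions whose
product is `w`. -/
noncomputable def permLen (n : ℕ) (w : Equiv.Perm (Fin n)) : ℕ :=
  sInf {l : ℕ | ∃ word : List ℕ, word.length = l ∧ (word.map (simpleT n)).prod = w}

/-- `word` is a reduced decomposition of `w`: its product is `w` and its length is `ℓ(w)`. -/
def IsReducedWord (n : ℕ) (word : List ℕ) (w : Equiv.Perm (Fin n)) : Prop :=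
  (word.map (simpleT n)).prod = w ∧ word.length = permLen n w

/-- The support of `w`: the set of letters `i` such that `sᵢ` appears in some reduced
decomposition of `w`. -/
def permSupp (n : ℕ) (w : Equiv.Perm (Fin n)) : Set ℕ :=
  {i | ∃ word : List ℕ, IsReducedWord n word w ∧ i ∈ word}

/-- Bruhat order: `v ≤ w` iff some reduced decomposition of `v` is a subword of some
reduced decomposition of `w`. -/
def bruhatLE (n : ℕ) (v w : Equiv.Perm (Fin n)) : Prop :=
  ∃ wordv wordw : List ℕ, IsReducedWord n wordv v ∧ IsReducedWord n wordw w ∧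
    wordv.Sublist wordw

/-- Strict Bruhat order. -/
def bruhatLT (n : ℕ) (v w : Equiv.Perm (Fin n)) : Prop :=
  bruhatLE n v w ∧ v ≠ w

/-- An occurrence of the pattern `p ∈ S_k` in `w ∈ S_n`: a strictly increasing sequence
`j` of indices such that the entries of `w` along `j` are in the same relative order
as the entries of `p`. -/
def IsPatternOcc {n k : ℕ} (w : Equiv.Perm (Fin n)) (p : Equiv.Perm (Fin k))
    (j : Fin k → Fin n) : Prop :=
  StrictMono j ∧ ∀ a b : Fin k, w (j a) < w (j b) ↔ p a < p b

/-- `w` contains the pattern `p`. -/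
def ContainsPattern {n k : ℕ} (w : Equiv.Perm (Fin n)) (p : Equiv.Perm (Fin k)) : Prop :=
  ∃ j : Fin k → Fin n, IsPatternOcc w p j

/-- `w` avoids the pattern `p`. -/
def AvoidsPattern {n k : ℕ} (w : Equiv.Perm (Fin n)) (p : Equiv.Perm (Fin k)) : Prop :=
  ¬ ContainsPattern w p

/-- `w` contains the pattern `p` exactly once. -/
def ContainsPatternOnce {n k : ℕ} (w : Equiv.Perm (Fin n)) (p : Equiv.Perm (Fin k)) : Prop :=
  ∃! j : Fin k → Fin n, IsPatternOcc w p j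

/-- The number of occurrences of the pattern `p` in `w`. -/
noncomputable def numOcc {n k : ℕ} (w : Equiv.Perm (Fin n)) (p : Equiv.Perm (Fin k)) : ℕ :=
  Set.ncard {j : Fin k → Fin n | IsPatternOcc w p j}

/-- The pattern `321` (one-line notation `1↦3, 2↦2, 3↦1`), as a permutation of `Fin 3`. -/
def pattern321 : Equiv.Perm (Fin 3) := Equiv.swap 0 2

/-- The pattern `3412` (one-line notation `1↦3, 2↦4, 3↦1, 4↦2`). -/
def pattern3412 : Equiv.Perm (Fin 4) := Equiv.swap 0 2 * Equiv.swap 1 3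

/-- The pattern `4231` (one-line notation `1↦4, 2↦2, 3↦3, 4↦1`). -/
def pattern4231 : Equiv.Perm (Fin 4) := Equiv.swap 0 3

/-- The pattern `4321` (one-line notation `1↦4, 2↦3, 3↦2, 4↦1`). -/
def pattern4321 : Equiv.Perm (Fin 4) := Equiv.swap 0 3 * Equiv.swap 1 2

/-- The point `(u(1), …, u(n)) ∈ ℝⁿ` attached to a permutation `u` (one-indexed values). -/
def permPoint (n : ℕ) (u : Equiv.Perm (Fin n)) : Fin n → ℝ :=
  fun k => ((u k : ℕ) : ℝ) + 1

/-- The Bruhat interval polytope `Q_{v,w}`: the convex hull of the points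
`(u(1), …, u(n))` for all `u` with `v ≤ u ≤ w` in Bruhat order. -/
noncomputable def BIP (n : ℕ) (v w : Equiv.Perm (Fin n)) : Set (Fin n → ℝ) :=
  convexHull ℝ
    {x | ∃ u : Equiv.Perm (Fin n), bruhatLE n v u ∧ bruhatLE n u w ∧ x = permPoint n u}

/-- A face of a polytope `P`: a convex extreme subset of `P`. -/
def IsFaceOf {E : Type*} [AddCommGroup E] [Module ℝ E] (P F : Set E) : Prop :=
  IsExtreme ℝ P F ∧ Convex ℝ F

/-- Combinatorial equivalence of two polytopes: an inclusion-preserving (in both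
directions) bijection between their face lattices. -/
def CombEquiv {E F : Type*} [AddCommGroup E] [Module ℝ E] [AddCommGroup F] [Module ℝ F]
    (P : Set E) (Q : Set F) : Prop :=
  ∃ e : {A : Set E // IsFaceOf P A} ≃ {B : Set F // IsFaceOf Q B},
    ∀ A B : {A : Set E // IsFaceOf P A}, A.1 ⊆ B.1 ↔ (e A).1 ⊆ (e B).1

/-- The transposition `(i, j)` (one-indexed values, `1 ≤ i < j ≤ n`), acting on
`{1, …, n}` represented by `Fin n`; identity for invalid input. -/
def transpPerm (n i j : ℕ) : Equiv.Perm (Fin n) :=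
  if h : 1 ≤ i ∧ i < j ∧ j ≤ n then Equiv.swap ⟨i - 1, by omega⟩ ⟨j - 1, by omega⟩ else 1

/-- `T̄(u,[v,w])`: the set of transpositions `(i,j)`, `i < j`, with
`u < u·(i,j) ≤ w` and `ℓ(u·(i,j)) = ℓ(u) + 1`. -/
def upperT (n : ℕ) (u v w : Equiv.Perm (Fin n)) : Set (ℕ × ℕ) :=
  {p | 1 ≤ p.1 ∧ p.1 < p.2 ∧ p.2 ≤ n ∧
    bruhatLT n u (u * transpPerm n p.1 p.2) ∧ bruhatLE n (u * transpPerm n p.1 p.2) w ∧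
    permLen n (u * transpPerm n p.1 p.2) = permLen n u + 1}

/-- `T̲(u,[v,w])`: the set of transpositions `(i,j)`, `i < j`, with
`v ≤ u·(i,j) < u` and `ℓ(u·(i,j)) = ℓ(u) - 1`. -/
def lowerT (n : ℕ) (u v w : Equiv.Perm (Fin n)) : Set (ℕ × ℕ) :=
  {p | 1 ≤ p.1 ∧ p.1 < p.2 ∧ p.2 ≤ n ∧
    bruhatLE n v (u * transpPerm n p.1 p.2) ∧ bruhatLT n (u * transpPerm n p.1 p.2) u ∧
    permLen n (u * transpPerm n p.1 p.2) + 1 = permLen n u}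

/-- The permutohedron `Perm₂ ⊂ ℝ³`, a hexagon. -/
noncomputable def Perm2Hex : Set (Fin 3 → ℝ) :=
  convexHull ℝ {x | ∃ σ : Equiv.Perm (Fin 3), x = permPoint 3 σ}

/-- The action of `s_r` on one-indexed letters: swaps `r` and `r + 1`. -/
def srNat (r x : ℕ) : ℕ := if x = r then r + 1 else if x = r + 1 then r else x

namespace Stmt14

open Equiv List

variable {n : ℕ}

/-- The inversion set of a permutation. -/
def InvSet (n : ℕ) (x : Equiv.Perm (Fin n)) : Finset (Fin n × Fin n) :=
  Finset.univ.filter fun pq => pq.1 < pq.2 ∧ x pq.2 < x pq.1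

/-- The inversion count. -/
def invCount (n : ℕ) (x : Equiv.Perm (Fin n)) : ℕ := (InvSet n x).card

lemma invCount_one : invCount n 1 = 0 := by
  simp only [invCount, InvSet, Finset.card_eq_zero, Finset.filter_eq_empty_iff]
  rintro ⟨p, q⟩ _
  simp only [Equiv.Perm.one_apply, not_and]
  intro h h'
  exact absurd (h.trans h') (lt_irrefl _)

lemma simpleT_mul_self (i : ℕ) : simpleT n i * simpleT n i = 1 := by
  unfold simpleT
  split_ifs
  · exact Equiv.swap_mul_self _ _
  · exact one_mul 1

lemma swap_lt_iff {a b : Fin n} (hab : (a : ℕ) + 1 = (b : ℕ)) {x y : Fin n} (hxy : x ≠ y) :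
    (Equiv.swap a b x < Equiv.swap a b y) ↔
      (if (x = a ∧ y = b) ∨ (x = b ∧ y = a) then y < x else x < y) := by
  have hxy' : (x : ℕ) ≠ (y : ℕ) := fun h => hxy (Fin.ext h)
  simp only [Equiv.swap_apply_def]
  split_ifs <;>
    (try simp only [Fin.lt_def, Fin.ext_iff, not_and, not_or] at *) <;>
    omega

lemma perm_apply_inv_self {α : Type*} (x : Equiv.Perm α) (a : α) : x (x⁻¹ a) = a := by simp

lemma perm_inv_apply_self {α : Type*} (x : Equiv.Perm α) (a : α) : x⁻¹ (x a) = a := by simp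

lemma invSet_asc_not_mem {a b : Fin n} (hab : (a : ℕ) + 1 = (b : ℕ)) {x : Equiv.Perm (Fin n)} :
    (x⁻¹ a, x⁻¹ b) ∉ InvSet n x := by
  simp only [InvSet, Finset.mem_filter, Finset.mem_univ, true_and, not_and,
    Stmt14.perm_apply_inv_self]
  intro _
  simp only [Fin.lt_def, not_lt]
  omega

lemma invSet_asc {a b : Fin n} (hab : (a : ℕ) + 1 = (b : ℕ)) {x : Equiv.Perm (Fin n)}
    (h : x⁻¹ a < x⁻¹ b) :
    InvSet n (Equiv.swap a b * x) = insert (x⁻¹ a, x⁻¹ b) (InvSet n x) := by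
  ext ⟨p, q⟩
  simp only [InvSet, Finset.mem_filter, Finset.mem_insert, Finset.mem_univ, true_and,
    Prod.mk.injEq]
  simp only [Equiv.Perm.mul_apply]
  constructor
  · rintro ⟨hpq, hlt⟩
    have hne : x q ≠ x p := fun hh => absurd (x.injective hh) (ne_of_gt hpq)
    rw [swap_lt_iff hab hne] at hlt
    split_ifs at hlt with hc
    · rcases hc with ⟨h1, h2⟩ | ⟨h1, h2⟩
      · exfalso
        have hq : q = x⁻¹ a := by rw [← h1]; simp
        have hp : p = x⁻¹ b := by rw [← h2]; simp
        rw [hp, hq] at hpq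
        exact absurd (hpq.trans h) (lt_irrefl _)
      · left
        exact ⟨by rw [← h2]; simp, by rw [← h1]; simp⟩
    · right; exact ⟨hpq, hlt⟩
  · rintro (⟨hp, hq⟩ | ⟨hpq, hlt⟩)
    · subst hp; subst hq
      refine ⟨h, ?_⟩
      simp only [Stmt14.perm_apply_inv_self, Equiv.swap_apply_left, Equiv.swap_apply_right]
      simp only [Fin.lt_def]; omega
    · refine ⟨hpq, ?_⟩
      have hne : x q ≠ x p := fun hh => absurd (x.injective hh) (ne_of_gt hpq)
      rw [swap_lt_iff hab hne, if_neg ?_]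
      · exact hlt
      · rintro (⟨h1, h2⟩ | ⟨h1, h2⟩)
        · have hq : q = x⁻¹ a := by rw [← h1]; simp
          have hp : p = x⁻¹ b := by rw [← h2]; simp
          rw [hp, hq] at hpq
          exact absurd (hpq.trans h) (lt_irrefl _)
        · rw [h1, h2] at hlt
          revert hlt
          simp only [Fin.lt_def, not_lt]
          omega

lemma invCount_asc {a b : Fin n} (hab : (a : ℕ) + 1 = (b : ℕ)) {x : Equiv.Perm (Fin n)}
    (h : x⁻¹ a < x⁻¹ b) :
    invCount n (Equiv.swap a b * x) = invCount n x + 1 := by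
  rw [invCount, invSet_asc hab h, Finset.card_insert_of_notMem (invSet_asc_not_mem hab)]
  rfl

lemma invCount_desc {a b : Fin n} (hab : (a : ℕ) + 1 = (b : ℕ)) {x : Equiv.Perm (Fin n)}
    (h : x⁻¹ b < x⁻¹ a) :
    invCount n x = invCount n (Equiv.swap a b * x) + 1 := by
  set y := Equiv.swap a b * x with hy_def
  have hy : Equiv.swap a b * y = x := by
    rw [hy_def, ← mul_assoc, Equiv.swap_mul_self, one_mul]
  have h1 : y⁻¹ a = x⁻¹ b := by
    simp [hy_def, mul_inv_rev, Equiv.swap_inv, Equiv.Perm.mul_apply]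
  have h2 : y⁻¹ b = x⁻¹ a := by
    simp [hy_def, mul_inv_rev, Equiv.swap_inv, Equiv.Perm.mul_apply]
  have := invCount_asc hab (show y⁻¹ a < y⁻¹ b by rw [h1, h2]; exact h)
  rw [hy] at this
  exact this

lemma invCount_simpleT_mul_le (i : ℕ) (x : Equiv.Perm (Fin n)) :
    invCount n (simpleT n i * x) ≤ invCount n x + 1 ∧
      invCount n x ≤ invCount n (simpleT n i * x) + 1 := by
  unfold simpleT
  split_ifs with h
  · set a : Fin n := ⟨i - 1, by omega⟩ with ha
    set b : Fin n := ⟨i, h.2⟩ with hb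
    have hab : (a : ℕ) + 1 = (b : ℕ) := by simp [ha, hb]; omega
    rcases lt_trichotomy (x⁻¹ a) (x⁻¹ b) with hlt | heq | hgt
    · rw [invCount_asc hab hlt]; omega
    · exfalso
      have : a = b := by
        have := congrArg x heq
        simpa using this
      rw [Fin.ext_iff] at this
      omega
    · rw [invCount_desc hab hgt]; omega
  · rw [one_mul]; omega

lemma invCount_le_word_length : ∀ word : List ℕ,
    invCount n (word.map (simpleT n)).prod ≤ word.length := by
  intro word
  induction word with
  | nil => simp [invCount_one]
  | cons i ω ih =>
    simp only [List.map_cons, List.prod_cons, List.length_cons]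
    have := (invCount_simpleT_mul_le (n := n) i (ω.map (simpleT n)).prod).1
    omega

lemma strictMono_eq_one {x : Equiv.Perm (Fin n)} (hx : StrictMono x) : x = 1 := by
  have hinv : StrictMono (x⁻¹ : Equiv.Perm (Fin n)) := by
    intro p q hpq
    rcases lt_trichotomy (x⁻¹ p) (x⁻¹ q) with h | h | h
    · exact h
    · exact absurd (congrArg x h) (by simpa using ne_of_lt hpq)
    · exact absurd (by simpa using hx h) (not_lt.mpr (le_of_lt hpq))
  have key : ∀ (y : Equiv.Perm (Fin n)), StrictMono y → ∀ m : ℕ, ∀ hm : m < n,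
      m ≤ (y ⟨m, hm⟩ : ℕ) := by
    intro y hy m
    induction m with
    | zero => intro _; omega
    | succ k ih =>
      intro hm
      have h1 := ih (by omega)
      have h2 := hy (show (⟨k, by omega⟩ : Fin n) < ⟨k + 1, hm⟩ by
        simp [Fin.lt_def])
      simp only [Fin.lt_def] at h2
      omega
  ext k
  have h1 := key x hx k.1 k.2
  have h2 := key x⁻¹ hinv (x k).1 (x k).2
  simp only [Fin.eta] at h1 h2
  rw [Stmt14.perm_inv_apply_self] at h2
  simp only [Equiv.Perm.one_apply]
  omega

lemma invCount_eq_zero {x : Equiv.Perm (Fin n)} (h : invCount n x = 0) : x = 1 := by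
  apply strictMono_eq_one
  intro p q hpq
  rcases lt_trichotomy (x p) (x q) with h' | h' | h'
  · exact h'
  · exact absurd (x.injective h') (ne_of_lt hpq)
  · exfalso
    have : (p, q) ∈ InvSet n x := by
      simp only [InvSet, Finset.mem_filter, Finset.mem_univ, true_and]
      exact ⟨hpq, h'⟩
    rw [invCount, Finset.card_eq_zero] at h
    rw [h] at this
    exact absurd this (Finset.notMem_empty _)

lemma exists_descent {x : Equiv.Perm (Fin n)} (hx : x ≠ 1) :
    ∃ (i : ℕ) (h1 : 1 ≤ i) (h2 : i < n),
      x⁻¹ (⟨i, h2⟩ : Fin n) < x⁻¹ (⟨i - 1, Nat.lt_of_le_of_lt (Nat.sub_le i 1) h2⟩ : Fin n) := by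
  by_contra hc
  push_neg at hc
  apply hx
  have hinv : x⁻¹ = 1 := by
    apply strictMono_eq_one
    have step : ∀ m : ℕ, ∀ hm : m + 1 < n,
        x⁻¹ (⟨m, by omega⟩ : Fin n) < x⁻¹ ⟨m + 1, hm⟩ := by
      intro m hm
      have h := hc (m + 1) (by omega) hm
      rcases lt_trichotomy (x⁻¹ ⟨m + 1, hm⟩) (x⁻¹ ⟨m, by omega⟩) with h' | h' | h'
      · exact absurd h' (by simpa using h)
      · exact absurd (congrArg x h') (by simp [Fin.ext_iff])
      · exact h'
    intro p q hpq
    have gen : ∀ d : ℕ, ∀ (a : ℕ) (h : a + d < n), 0 < d →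
        x⁻¹ (⟨a, by omega⟩ : Fin n) < x⁻¹ ⟨a + d, h⟩ := by
      intro d
      induction d with
      | zero => intro a h h0; omega
      | succ k ih =>
        intro a h h0
        rcases Nat.eq_zero_or_pos k with hk | hk
        · subst hk; exact step a (by omega)
        · exact (ih a (by omega) hk).trans (by
            have := step (a + k) (by omega)
            exact this)
    have hlt : (p : ℕ) < (q : ℕ) := hpq
    have h := gen ((q : ℕ) - (p : ℕ)) (p : ℕ) (by omega) (by omega)
    have e : q = ⟨(p : ℕ) + ((q : ℕ) - (p : ℕ)), by omega⟩ :=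
      Fin.ext (show (q : ℕ) = (p : ℕ) + ((q : ℕ) - (p : ℕ)) by omega)
    rw [e]; exact h
  have := congrArg (·⁻¹) hinv
  simpa using this

lemma exists_word_invCount (x : Equiv.Perm (Fin n)) :
    ∃ word : List ℕ, (word.map (simpleT n)).prod = x ∧ word.length = invCount n x := by
  generalize hN : invCount n x = N
  induction N generalizing x with
  | zero =>
    rw [invCount_eq_zero hN]
    exact ⟨[], by simp⟩
  | succ N ih =>
    have hx1 : x ≠ 1 := by
      intro h; rw [h, invCount_one] at hN; omega
    obtain ⟨i, h1, h2, hdesc⟩ := exists_descent hx1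
    set a : Fin n := ⟨i - 1, by omega⟩ with ha
    set b : Fin n := ⟨i, h2⟩ with hb
    have hab : (a : ℕ) + 1 = (b : ℕ) := by simp [ha, hb]; omega
    have hcount := invCount_desc hab hdesc
    rw [hN] at hcount
    obtain ⟨ω, hω1, hω2⟩ := ih (Equiv.swap a b * x) (by omega)
    refine ⟨i :: ω, ?_, by simp [hω2]⟩
    simp only [List.map_cons, List.prod_cons, hω1]
    have hs : simpleT n i = Equiv.swap a b := by
      unfold simpleT
      rw [dif_pos ⟨h1, h2⟩]
    rw [hs, ← mul_assoc, Equiv.swap_mul_self, one_mul]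

lemma permLen_eq_invCount (x : Equiv.Perm (Fin n)) : permLen n x = invCount n x := by
  apply Nat.le_antisymm
  · obtain ⟨ω, h1, h2⟩ := exists_word_invCount x
    exact Nat.sInf_le ⟨ω, h2, h1⟩
  · apply le_csInf
    · obtain ⟨ω, h1, h2⟩ := exists_word_invCount x
      exact ⟨_, ω, h2, h1⟩
    · rintro l ⟨ω, hlen, hprod⟩
      rw [← hlen, ← hprod]
      exact invCount_le_word_length ω

lemma permLen_le_word {word : List ℕ} {x : Equiv.Perm (Fin n)}
    (h : (word.map (simpleT n)).prod = x) : permLen n x ≤ word.length :=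
  Nat.sInf_le ⟨word, rfl, h⟩

lemma exists_reduced (x : Equiv.Perm (Fin n)) : ∃ word, IsReducedWord n word x := by
  obtain ⟨ω, h1, h2⟩ := exists_word_invCount x
  exact ⟨ω, h1, by rw [h2, permLen_eq_invCount]⟩

/-- `x` preserves the blocks `{0,…,r-1}` and `{r,…,n-1}` (0-indexed). -/
def Split (n r : ℕ) (x : Equiv.Perm (Fin n)) : Prop :=
  ∀ k : Fin n, (x k : ℕ) < r ↔ (k : ℕ) < r

variable {r : ℕ}

lemma split_one : Split n r 1 := fun k => Iff.rfl

lemma split_inv {x : Equiv.Perm (Fin n)} (hx : Split n r x) : Split n r x⁻¹ := by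
  intro k
  have := hx (x⁻¹ k)
  rw [Stmt14.perm_apply_inv_self] at this
  exact this.symm

lemma simpleT_val_lt {i : ℕ} (hi : i ≠ r) (v : Fin n) :
    ((simpleT n i v : ℕ) < r ↔ (v : ℕ) < r) := by
  unfold simpleT
  split_ifs with h
  · rw [Equiv.swap_apply_def]
    split_ifs with hva hvb
    · rw [hva]
      show (i : ℕ) < r ↔ (i - 1 : ℕ) < r
      omega
    · rw [hvb]
      show (i - 1 : ℕ) < r ↔ (i : ℕ) < r
      omega
    · exact Iff.rfl
  · exact Iff.rfl

lemma split_simpleT_mul {i : ℕ} (hi : i ≠ r) {x : Equiv.Perm (Fin n)} (hx : Split n r x) :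
    Split n r (simpleT n i * x) := by
  intro k
  rw [Equiv.Perm.mul_apply, simpleT_val_lt hi]
  exact hx k

lemma split_prod {word : List ℕ} (hword : r ∉ word) :
    Split n r (word.map (simpleT n)).prod := by
  induction word with
  | nil => exact split_one
  | cons i ω ih =>
    simp only [List.mem_cons, not_or] at hword
    simp only [List.map_cons, List.prod_cons]
    exact split_simpleT_mul (Ne.symm (by exact hword.1)) (ih hword.2)

lemma simpleT_r_eq (hr : 1 ≤ r) (hrn : r < n) :
    simpleT n r = Equiv.swap (⟨r - 1, Nat.lt_of_le_of_lt (Nat.sub_le r 1) hrn⟩ : Fin n) ⟨r, hrn⟩ := by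
  unfold simpleT
  rw [dif_pos ⟨hr, hrn⟩]

lemma invCount_s_mul_split (hr : 1 ≤ r) (hrn : r < n) {x : Equiv.Perm (Fin n)}
    (hx : Split n r x) :
    invCount n (simpleT n r * x) = invCount n x + 1 := by
  rw [simpleT_r_eq hr hrn]
  apply invCount_asc (by simp only [Fin.val_mk]; omega)
  have h1 := (split_inv hx) ⟨r - 1, by omega⟩
  have h2 := (split_inv hx) ⟨r, hrn⟩
  simp only [Fin.lt_def, Fin.val_mk] at h1 h2 ⊢
  omega

lemma permLen_s_mul_split (hr : 1 ≤ r) (hrn : r < n) {x : Equiv.Perm (Fin n)}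
    (hx : Split n r x) :
    permLen n (simpleT n r * x) = permLen n x + 1 := by
  rw [permLen_eq_invCount, permLen_eq_invCount]
  exact invCount_s_mul_split hr hrn hx

lemma not_split_s_mul (hr : 1 ≤ r) (hrn : r < n) {x : Equiv.Perm (Fin n)}
    (hx : Split n r x) :
    ¬ Split n r (simpleT n r * x) := by
  intro hs
  have := hs (x⁻¹ ⟨r - 1, by omega⟩)
  rw [Equiv.Perm.mul_apply, Stmt14.perm_apply_inv_self, simpleT_r_eq hr hrn,
    Equiv.swap_apply_left] at this
  have h2 := (split_inv hx) ⟨r - 1, by omega⟩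
  simp only [Fin.val_mk] at this h2
  omega

lemma reduced_cons {i : ℕ} {ω : List ℕ} {x : Equiv.Perm (Fin n)}
    (h : IsReducedWord n (i :: ω) x) :
    (1 ≤ i ∧ i < n) ∧ IsReducedWord n ω (simpleT n i * x) ∧
      permLen n (simpleT n i * x) + 1 = permLen n x := by
  obtain ⟨hprod, hlen⟩ := h
  simp only [List.map_cons, List.prod_cons] at hprod
  simp only [List.length_cons] at hlen
  have hπ : (ω.map (simpleT n)).prod = simpleT n i * x := by
    rw [← hprod, ← mul_assoc, simpleT_mul_self, one_mul]
  have hlow : permLen n (simpleT n i * x) ≤ ω.length := permLen_le_word hπ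
  have hup : permLen n x ≤ permLen n (simpleT n i * x) + 1 := by
    rw [permLen_eq_invCount, permLen_eq_invCount]
    have := (invCount_simpleT_mul_le i (simpleT n i * x)).1
    rwa [← mul_assoc, simpleT_mul_self, one_mul] at this
  have hvalid : 1 ≤ i ∧ i < n := by
    by_contra hc
    have h1 : simpleT n i = 1 := by unfold simpleT; rw [dif_neg hc]
    rw [h1, one_mul] at hπ
    have := permLen_le_word hπ
    omega
  exact ⟨hvalid, ⟨hπ, by omega⟩, by omega⟩

lemma reduced_cons_of {i : ℕ} {ω : List ℕ} {y : Equiv.Perm (Fin n)}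
    (hω : IsReducedWord n ω y) (hlen : permLen n (simpleT n i * y) = permLen n y + 1) :
    IsReducedWord n (i :: ω) (simpleT n i * y) := by
  refine ⟨?_, ?_⟩
  · simp only [List.map_cons, List.prod_cons, hω.1]
  · simp only [List.length_cons, hω.2, hlen]

lemma reduced_avoids_r (hr : 1 ≤ r) (hrn : r < n) :
    ∀ {ω : List ℕ} {x : Equiv.Perm (Fin n)}, Split n r x → IsReducedWord n ω x → r ∉ ω := by
  intro ω
  induction ω with
  | nil => intro x _ _; simp
  | cons i ω ih =>
    intro x hx hred
    obtain ⟨hvalid, hred', hlen⟩ := reduced_cons hred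
    have hir : i ≠ r := by
      intro hir
      subst hir
      have := permLen_s_mul_split hr hrn hx
      omega
    have hx' : Split n r (simpleT n i * x) := split_simpleT_mul hir hx
    have := ih hx' hred'
    simp only [List.mem_cons, not_or]
    exact ⟨Ne.symm hir, this⟩

lemma split_of_reduced_avoids {ω : List ℕ} {x : Equiv.Perm (Fin n)}
    (hred : IsReducedWord n ω x) (hω : r ∉ ω) : Split n r x := by
  rw [← hred.1]
  exact split_prod hω

lemma split_of_le {y z : Equiv.Perm (Fin n)} (hr : 1 ≤ r) (hrn : r < n)
    (h : bruhatLE n y z) (hz : Split n r z) : Split n r y := by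
  obtain ⟨ωy, ωz, hy, hz', hsub⟩ := h
  have hrz : r ∉ ωz := reduced_avoids_r hr hrn hz hz'
  exact split_of_reduced_avoids hy fun hm => hrz (hsub.subset hm)

lemma eq_of_le_of_len_eq {y z : Equiv.Perm (Fin n)} (h : bruhatLE n y z)
    (hlen : permLen n y = permLen n z) : y = z := by
  obtain ⟨ωy, ωz, hy, hz, hsub⟩ := h
  have : ωy = ωz := hsub.eq_of_length (by rw [hy.2, hz.2, hlen])
  rw [← hy.1, ← hz.1, this]

lemma le_s_mul_of_le (hr : 1 ≤ r) (hrn : r < n) {v x : Equiv.Perm (Fin n)}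
    (h : bruhatLE n v x) (hx : Split n r x) : bruhatLE n v (simpleT n r * x) := by
  obtain ⟨ωv, ωx, hv, hx', hsub⟩ := h
  exact ⟨ωv, r :: ωx, hv, reduced_cons_of hx' (permLen_s_mul_split hr hrn hx),
    hsub.trans (List.sublist_cons_self r ωx)⟩

lemma s_mul_le_s_mul (hr : 1 ≤ r) (hrn : r < n) {y z : Equiv.Perm (Fin n)}
    (h : bruhatLE n y z) (hz : Split n r z) :
    bruhatLE n (simpleT n r * y) (simpleT n r * z) := by
  have hy : Split n r y := split_of_le hr hrn h hz
  obtain ⟨ωy, ωz, hy', hz', hsub⟩ := h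
  exact ⟨r :: ωy, r :: ωz, reduced_cons_of hy' (permLen_s_mul_split hr hrn hy),
    reduced_cons_of hz' (permLen_s_mul_split hr hrn hz), hsub.cons₂ r⟩

lemma le_s_mul_self (hr : 1 ≤ r) (hrn : r < n) {x : Equiv.Perm (Fin n)}
    (hx : Split n r x) : bruhatLE n x (simpleT n r * x) := by
  obtain ⟨ω, hω⟩ := exists_reduced x
  exact ⟨ω, r :: ω, hω, reduced_cons_of hω (permLen_s_mul_split hr hrn hx),
    List.sublist_cons_self r ω⟩

lemma simpleT_inv (i : ℕ) : (simpleT n i)⁻¹ = simpleT n i :=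
  inv_eq_of_mul_eq_one_right (simpleT_mul_self i)

lemma simpleT_r_apply_left (hr : 1 ≤ r) (hrn : r < n) :
    simpleT n r (⟨r - 1, Nat.lt_of_le_of_lt (Nat.sub_le r 1) hrn⟩ : Fin n) = ⟨r, hrn⟩ := by
  rw [simpleT_r_eq hr hrn, Equiv.swap_apply_left]

lemma simpleT_r_apply_right (hr : 1 ≤ r) (hrn : r < n) :
    simpleT n r (⟨r, hrn⟩ : Fin n) = ⟨r - 1, Nat.lt_of_le_of_lt (Nat.sub_le r 1) hrn⟩ := by
  rw [simpleT_r_eq hr hrn, Equiv.swap_apply_right]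

lemma simpleT_r_apply_ne (hr : 1 ≤ r) (hrn : r < n) (v : Fin n)
    (h1 : (v : ℕ) ≠ r - 1) (h2 : (v : ℕ) ≠ r) : simpleT n r v = v := by
  rw [simpleT_r_eq hr hrn]
  exact Equiv.swap_apply_of_ne_of_ne (Fin.ne_of_val_ne h1) (Fin.ne_of_val_ne h2)

lemma permLen_simpleT_mul_asc {i : ℕ} (h1 : 1 ≤ i) (h2 : i < n) (x : Equiv.Perm (Fin n))
    (h : x⁻¹ (⟨i - 1, Nat.lt_of_le_of_lt (Nat.sub_le i 1) h2⟩ : Fin n) < x⁻¹ ⟨i, h2⟩) :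
    permLen n (simpleT n i * x) = permLen n x + 1 := by
  rw [permLen_eq_invCount, permLen_eq_invCount]
  have hs : simpleT n i = Equiv.swap (⟨i - 1, by omega⟩ : Fin n) ⟨i, h2⟩ := by
    unfold simpleT; rw [dif_pos ⟨h1, h2⟩]
  rw [hs]
  exact invCount_asc (by simp only [Fin.val_mk]; omega) h

lemma le_of_le_sub (i : ℕ) {z w' : Equiv.Perm (Fin n)}
    (hlen : permLen n (simpleT n i * w') = permLen n w' + 1) (h : bruhatLE n z w') :
    bruhatLE n z (simpleT n i * w') := by
  obtain ⟨ω1, ω2, a, b, c⟩ := h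
  exact ⟨ω1, i :: ω2, a, reduced_cons_of b hlen, c.trans (List.sublist_cons_self i ω2)⟩

lemma s_mul_le_s_mul_of (i : ℕ) {y z : Equiv.Perm (Fin n)}
    (hy : permLen n (simpleT n i * y) = permLen n y + 1)
    (hz : permLen n (simpleT n i * z) = permLen n z + 1) (h : bruhatLE n y z) :
    bruhatLE n (simpleT n i * y) (simpleT n i * z) := by
  obtain ⟨ω1, ω2, a, b, c⟩ := h
  exact ⟨i :: ω1, i :: ω2, reduced_cons_of a hy, reduced_cons_of b hz, c.cons₂ i⟩

lemma simpleT_comm {i j : ℕ} (hij : i + 2 ≤ j) :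
    simpleT n i * simpleT n j = simpleT n j * simpleT n i := by
  unfold simpleT
  split_ifs with h1 h2 h2
  · apply Equiv.Perm.Disjoint.commute
    intro x
    rcases eq_or_ne x ⟨j - 1, by omega⟩ with rfl | hx1
    · left
      apply Equiv.swap_apply_of_ne_of_ne <;>
        (apply Fin.ne_of_val_ne; simp only [Fin.val_mk]; omega)
    rcases eq_or_ne x ⟨j, h2.2⟩ with rfl | hx2
    · left
      apply Equiv.swap_apply_of_ne_of_ne <;>
        (apply Fin.ne_of_val_ne; simp only [Fin.val_mk]; omega)
    · right
      exact Equiv.swap_apply_of_ne_of_ne hx1 hx2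
  · rw [mul_one, one_mul]
  · rw [mul_one, one_mul]
  · rfl

lemma split_inv_lt_of {w : Equiv.Perm (Fin n)} (hw : Split n r w) {a b : Fin n}
    (ha : (a : ℕ) < r) (hb : r ≤ (b : ℕ)) : w⁻¹ a < w⁻¹ b := by
  have h1 := (split_inv hw) a
  have h2 := (split_inv hw) b
  rw [Fin.lt_def]
  omega

/-- The main lifting lemma: if `w` is split and `y ≤ s_r w`, then either `y` is split
and `y ≤ w`, or `s_r y` is split and `s_r y ≤ w`. -/
lemma lifting (hr : 1 ≤ r) (hrn : r < n) :
    ∀ N (w y : Equiv.Perm (Fin n)), permLen n w = N → Split n r w →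
      bruhatLE n y (simpleT n r * w) →
      (Split n r y ∧ bruhatLE n y w) ∨
        (Split n r (simpleT n r * y) ∧ bruhatLE n (simpleT n r * y) w) := by
  intro N
  induction N using Nat.strong_induction_on with
  | _ N ih =>
  intro w y hN hw hle
  obtain ⟨ωy, ζ, hωy, hζ, hsub⟩ := hle
  have hslen : permLen n (simpleT n r * w) = permLen n w + 1 := permLen_s_mul_split hr hrn hw
  cases ζ with
  | nil =>
    exfalso
    have := hζ.2
    simp only [List.length_nil] at this
    omega
  | cons i ζ' =>
    obtain ⟨⟨hi1, hi2⟩, hζ', hlen'⟩ := reduced_cons hζ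
    rw [List.sublist_cons_iff] at hsub
    rcases eq_or_ne i r with rfl | hir
    · -- first letter is r
      have hζ'w : IsReducedWord n ζ' w := by
        rwa [← mul_assoc, simpleT_mul_self, one_mul] at hζ'
      have hrζ' : i ∉ ζ' := reduced_avoids_r hr hrn hw hζ'w
      rcases hsub with hsub | ⟨ω'', rfl, hsub⟩
      · left
        have hry : i ∉ ωy := fun hm => hrζ' (hsub.subset hm)
        exact ⟨split_of_reduced_avoids hωy hry, ⟨ωy, ζ', hωy, hζ'w, hsub⟩⟩
      · right
        obtain ⟨_, hω'', _⟩ := reduced_cons hωy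
        have hrω : i ∉ ω'' := fun hm => hrζ' (hsub.subset hm)
        exact ⟨split_of_reduced_avoids hω'' hrω, ⟨ω'', ζ', hω'', hζ'w, hsub⟩⟩
    · -- first letter i ≠ r
      have hinv : (simpleT n r * w)⁻¹ = w⁻¹ * simpleT n r := by
        rw [mul_inv_rev, simpleT_inv]
      have hir2 : i ≠ r + 1 := by
        intro h
        subst h
        have ha : (simpleT n r * w)⁻¹ (⟨r + 1 - 1, by omega⟩ : Fin n) <
            (simpleT n r * w)⁻¹ ⟨r + 1, hi2⟩ := by
          have e1 : (⟨r + 1 - 1, by omega⟩ : Fin n) = ⟨r, hrn⟩ := Fin.ext (by show r + 1 - 1 = r; omega)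
          rw [hinv, e1]
          simp only [Equiv.Perm.mul_apply]
          rw [simpleT_r_apply_right hr hrn,
            simpleT_r_apply_ne hr hrn _ (by simp only [Fin.val_mk]; omega)
              (by simp only [Fin.val_mk]; omega)]
          exact split_inv_lt_of hw (by simp only [Fin.val_mk]; omega)
            (by simp only [Fin.val_mk]; omega)
        have := permLen_simpleT_mul_asc (by omega) hi2 _ ha
        omega
      have hir3 : i + 1 ≠ r := by
        intro h
        have ha : (simpleT n r * w)⁻¹ (⟨i - 1, by omega⟩ : Fin n) <
            (simpleT n r * w)⁻¹ ⟨i, hi2⟩ := by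
          rw [hinv]
          simp only [Equiv.Perm.mul_apply]
          have e1 : (⟨i, hi2⟩ : Fin n) = ⟨r - 1, by omega⟩ := Fin.ext (by show i = r - 1; omega)
          rw [e1, simpleT_r_apply_left hr hrn,
            simpleT_r_apply_ne hr hrn _ (by simp only [Fin.val_mk]; omega)
              (by simp only [Fin.val_mk]; omega)]
          exact split_inv_lt_of hw (by simp only [Fin.val_mk]; omega)
            (by simp only [Fin.val_mk]; omega)
        have := permLen_simpleT_mul_asc hi1 hi2 _ ha
        omega
      have hcomm : simpleT n i * simpleT n r = simpleT n r * simpleT n i := by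
        rcases lt_or_gt_of_ne hir with h | h
        · exact simpleT_comm (by omega)
        · exact (simpleT_comm (by omega)).symm
      set w' := simpleT n i * w with hw'def
      have hsw' : simpleT n i * (simpleT n r * w) = simpleT n r * w' := by
        rw [← mul_assoc, hcomm, mul_assoc]
      have hw's : Split n r w' := split_simpleT_mul hir hw
      rw [hsw'] at hζ' hlen'
      have hlw' : permLen n (simpleT n r * w') = permLen n w' + 1 :=
        permLen_s_mul_split hr hrn hw's
      have hsi_w' : simpleT n i * w' = w := by
        rw [hw'def, ← mul_assoc, simpleT_mul_self, one_mul]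
      have hlen_w : permLen n (simpleT n i * w') = permLen n w' + 1 := by
        rw [hsi_w']; omega
      rcases hsub with hsub | ⟨ω'', rfl, hsub⟩
      · have hy' : bruhatLE n y (simpleT n r * w') := ⟨ωy, ζ', hωy, hζ', hsub⟩
        rcases ih (permLen n w') (by omega) w' y rfl hw's hy' with ⟨h1, h2⟩ | ⟨h1, h2⟩
        · exact Or.inl ⟨h1, by rw [← hsi_w']; exact le_of_le_sub i hlen_w h2⟩
        · exact Or.inr ⟨h1, by rw [← hsi_w']; exact le_of_le_sub i hlen_w h2⟩
      · obtain ⟨_, hω'', hlen''⟩ := reduced_cons hωy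
        set y' := simpleT n i * y with hy'def
        have hsiy' : simpleT n i * y' = y := by
          rw [hy'def, ← mul_assoc, simpleT_mul_self, one_mul]
        have hy'le : bruhatLE n y' (simpleT n r * w') := ⟨ω'', ζ', hω'', hζ', hsub⟩
        rcases ih (permLen n w') (by omega) w' y' rfl hw's hy'le with ⟨h1, h2⟩ | ⟨h1, h2⟩
        · left
          constructor
          · rw [← hsiy']; exact split_simpleT_mul hir h1
          · rw [← hsiy', ← hsi_w']
            exact s_mul_le_s_mul_of i (by rw [hsiy']; omega) hlen_w h2
        · right
          have hkey : simpleT n r * y = simpleT n i * (simpleT n r * y') := by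
            rw [← mul_assoc, hcomm, mul_assoc, hsiy']
          have hsplit_sy : Split n r (simpleT n r * y) := by
            rw [hkey]; exact split_simpleT_mul hir h1
          have e1 : permLen n y' = permLen n (simpleT n r * y') + 1 := by
            have := permLen_s_mul_split hr hrn h1
            rwa [← mul_assoc, simpleT_mul_self, one_mul] at this
          have e3 : permLen n y = permLen n (simpleT n r * y) + 1 := by
            have := permLen_s_mul_split hr hrn hsplit_sy
            rwa [← mul_assoc, simpleT_mul_self, one_mul] at this
          have e4 : permLen n (simpleT n i * (simpleT n r * y')) =
              permLen n (simpleT n r * y') + 1 := by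
            rw [← hkey]
            omega
          exact ⟨hsplit_sy, by rw [hkey, ← hsi_w']; exact s_mul_le_s_mul_of i e4 hlen_w h2⟩

lemma swap_inj_ordered {a b c d : Fin n} (hab : a < b) (hcd : c < d)
    (h : Equiv.swap a b = Equiv.swap c d) : a = c ∧ b = d := by
  by_cases hac : a = c
  · subst hac
    have h1 : Equiv.swap a b a = Equiv.swap a d a := by rw [h]
    rw [Equiv.swap_apply_left, Equiv.swap_apply_left] at h1
    exact ⟨rfl, h1⟩
  · exfalso
    by_cases had : a = d
    · subst had
      have h1 : Equiv.swap a b a = Equiv.swap c a a := by rw [h]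
      rw [Equiv.swap_apply_left, Equiv.swap_apply_right] at h1
      rw [h1] at hab
      exact absurd (hcd.trans hab) (lt_irrefl _)
    · have h1 : Equiv.swap a b a = Equiv.swap c d a := by rw [h]
      rw [Equiv.swap_apply_left, Equiv.swap_apply_of_ne_of_ne hac had] at h1
      rw [h1] at hab
      exact absurd hab (lt_irrefl _)

lemma transpPerm_eq {i j : ℕ} (h1 : 1 ≤ i) (h2 : i < j) (h3 : j ≤ n) :
    transpPerm n i j =
      Equiv.swap (⟨i - 1, by omega⟩ : Fin n) ⟨j - 1, by omega⟩ :=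
  dif_pos ⟨h1, h2, h3⟩

lemma ss_cancel {x : Equiv.Perm (Fin n)} {i : ℕ} :
    simpleT n i * (simpleT n i * x) = x := by
  rw [← mul_assoc, simpleT_mul_self, one_mul]

/-- Main equivalence for the `upperT` part. -/
lemma key_up (hr : 1 ≤ r) (hrn : r < n) {u w : Equiv.Perm (Fin n)}
    (usplit : Split n r u) (wsplit : Split n r w) (t : Equiv.Perm (Fin n)) :
    (bruhatLT n (simpleT n r * u) (simpleT n r * u * t) ∧
      bruhatLE n (simpleT n r * u * t) (simpleT n r * w) ∧
      permLen n (simpleT n r * u * t) = permLen n (simpleT n r * u) + 1) ↔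
    (bruhatLT n u (u * t) ∧ bruhatLE n (u * t) w ∧
      permLen n (u * t) = permLen n u + 1) := by
  rw [mul_assoc]
  set x := u * t with hx
  have hulen : permLen n (simpleT n r * u) = permLen n u + 1 :=
    permLen_s_mul_split hr hrn usplit
  constructor
  · rintro ⟨⟨hle1, hne1⟩, hle2, hlen⟩
    rcases lifting hr hrn _ w (simpleT n r * x) rfl wsplit hle2 with ⟨hsp, hle⟩ | ⟨hsp, hle⟩
    · exact absurd (split_of_le hr hrn hle1 hsp) (not_split_s_mul hr hrn usplit)
    · rw [ss_cancel] at hsp hle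
      have hxlen : permLen n (simpleT n r * x) = permLen n x + 1 :=
        permLen_s_mul_split hr hrn hsp
      refine ⟨⟨?_, fun hux => hne1 (by rw [hux])⟩, hle, by omega⟩
      rcases lifting hr hrn _ x (simpleT n r * u) rfl hsp hle1 with ⟨hsp', _⟩ | ⟨hsp', hle'⟩
      · exact absurd hsp' (not_split_s_mul hr hrn usplit)
      · rw [ss_cancel] at hle'
        exact hle'
  · rintro ⟨⟨hle1, hne1⟩, hle2, hlen⟩
    have hxsplit : Split n r x := split_of_le hr hrn hle2 wsplit
    have hxlen : permLen n (simpleT n r * x) = permLen n x + 1 :=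
      permLen_s_mul_split hr hrn hxsplit
    exact ⟨⟨s_mul_le_s_mul hr hrn hle1 hxsplit, fun h => hne1 (mul_left_cancel h)⟩,
      s_mul_le_s_mul hr hrn hle2 wsplit, by omega⟩

/-- Main equivalence for the `lowerT` part. -/
lemma key_low (hr : 1 ≤ r) (hrn : r < n) {u v w : Equiv.Perm (Fin n)}
    (hvu : bruhatLE n v u)
    (usplit : Split n r u) (vsplit : Split n r v)
    (a' b' : Fin n) (ha' : u a' = ⟨r - 1, Nat.lt_of_le_of_lt (Nat.sub_le r 1) hrn⟩) (hb' : u b' = ⟨r, hrn⟩) :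
    lowerT n (simpleT n r * u) v (simpleT n r * w) =
      lowerT n u v w ∪ {((a' : ℕ) + 1, (b' : ℕ) + 1)} := by
  have hulen : permLen n (simpleT n r * u) = permLen n u + 1 :=
    permLen_s_mul_split hr hrn usplit
  have haval : (a' : ℕ) < r := by
    have h := usplit a'
    rw [ha'] at h
    exact h.mp (by show r - 1 < r; omega)
  have hbval : r ≤ (b' : ℕ) := by
    have h := usplit b'
    rw [hb'] at h
    by_contra hcon
    push_neg at hcon
    exact absurd (h.mpr hcon) (lt_irrefl r)
  have hbn : (b' : ℕ) < n := b'.isLt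
  have ht0 : u * transpPerm n ((a' : ℕ) + 1) ((b' : ℕ) + 1) = simpleT n r * u := by
    rw [transpPerm_eq (by omega) (by omega) (by omega)]
    rw [show (⟨(a' : ℕ) + 1 - 1, by omega⟩ : Fin n) = a' from Fin.ext rfl,
        show (⟨(b' : ℕ) + 1 - 1, by omega⟩ : Fin n) = b' from Fin.ext rfl]
    have h := Equiv.swap_apply_apply u a' b'
    rw [ha', hb'] at h
    rw [simpleT_r_eq hr hrn, h]
    group
  apply Set.ext
  intro p
  simp only [lowerT, Set.mem_union, Set.mem_setOf_eq, Set.mem_singleton_iff]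
  constructor
  · rintro ⟨h1, h2, h3, hvle, ⟨hlt, hne⟩, hlen⟩
    rw [mul_assoc] at hvle hlt hne hlen
    rcases lifting hr hrn _ u _ rfl usplit hlt with ⟨hsp, hle⟩ | ⟨hsp, hle⟩
    · right
      have hlen2 : permLen n (simpleT n r * (u * transpPerm n p.1 p.2)) = permLen n u := by
        omega
      have hequ : simpleT n r * (u * transpPerm n p.1 p.2) = u :=
        eq_of_le_of_len_eq hle hlen2
      have hx' : u * transpPerm n p.1 p.2 = simpleT n r * u := by
        have h5 := congrArg (fun z => simpleT n r * z) hequ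
        simpa only [ss_cancel] using h5
      have ht_eq : transpPerm n p.1 p.2 = transpPerm n ((a' : ℕ) + 1) ((b' : ℕ) + 1) :=
        mul_left_cancel (show u * transpPerm n p.1 p.2 = _ by rw [hx', ht0])
      rw [transpPerm_eq h1 h2 h3, transpPerm_eq (by omega) (by omega) (by omega)] at ht_eq
      rw [show (⟨(a' : ℕ) + 1 - 1, by omega⟩ : Fin n) = a' from Fin.ext rfl,
          show (⟨(b' : ℕ) + 1 - 1, by omega⟩ : Fin n) = b' from Fin.ext rfl] at ht_eq
      obtain ⟨q1, q2⟩ := swap_inj_ordered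
        (show (⟨p.1 - 1, by omega⟩ : Fin n) < ⟨p.2 - 1, by omega⟩ from by
          rw [Fin.lt_def]; show p.1 - 1 < p.2 - 1; omega)
        (show a' < b' from by rw [Fin.lt_def]; omega) ht_eq
      have q1' : p.1 - 1 = (a' : ℕ) := congrArg Fin.val q1
      have q2' : p.2 - 1 = (b' : ℕ) := congrArg Fin.val q2
      rw [Prod.ext_iff]
      exact ⟨by omega, by omega⟩
    · rw [ss_cancel] at hsp hle
      left
      have hxlen := permLen_s_mul_split hr hrn hsp
      refine ⟨h1, h2, h3, ?_, ⟨hle, fun hxu => hne (by rw [hxu])⟩, by omega⟩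
      rcases lifting hr hrn _ (u * transpPerm n p.1 p.2) v rfl hsp hvle with
        ⟨_, hvx⟩ | ⟨hspv, _⟩
      · exact hvx
      · exact absurd hspv (not_split_s_mul hr hrn vsplit)
  · rintro (⟨h1, h2, h3, hvle, ⟨hlt, hne⟩, hlen⟩ | hp)
    · have hxsplit : Split n r (u * transpPerm n p.1 p.2) := split_of_le hr hrn hlt usplit
      have hxlen := permLen_s_mul_split hr hrn hxsplit
      refine ⟨h1, h2, h3, ?_, ⟨?_, ?_⟩, ?_⟩
      · rw [mul_assoc]; exact le_s_mul_of_le hr hrn hvle hxsplit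
      · rw [mul_assoc]; exact s_mul_le_s_mul hr hrn hlt usplit
      · rw [mul_assoc]; exact fun h => hne (mul_left_cancel h)
      · rw [mul_assoc]; omega
    · have hp1 : p.1 = (a' : ℕ) + 1 := by rw [hp]
      have hp2 : p.2 = (b' : ℕ) + 1 := by rw [hp]
      have hsut0 : simpleT n r * u * transpPerm n p.1 p.2 = u := by
        rw [hp1, hp2, mul_assoc, ht0, ss_cancel]
      refine ⟨by omega, by omega, by omega, ?_, ⟨?_, ?_⟩, ?_⟩
      · rw [hsut0]; exact hvu
      · rw [hsut0]; exact le_s_mul_self hr hrn usplit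
      · rw [hsut0]; exact fun h => not_split_s_mul hr hrn usplit (h ▸ usplit)
      · rw [hsut0]; omega

end Stmt14

/-- For `v ≤ u ≤ w` and `s_r ∉ supp(w)`:
`T̄(s_r u,[v, s_r w]) = T̄(u,[v,w])` and
`T̲(s_r u,[v, s_r w]) = T̲(u,[v,w]) ∪ {(u⁻¹(r), u⁻¹(r+1))}`. -/
theorem stmt14 (n r : ℕ) (hr : 1 ≤ r) (hrn : r < n) (u v w : Equiv.Perm (Fin n))
    (hvu : bruhatLE n v u) (huw : bruhatLE n u w) (hw : r ∉ permSupp n w) :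
    upperT n (simpleT n r * u) v (simpleT n r * w) = upperT n u v w ∧
    lowerT n (simpleT n r * u) v (simpleT n r * w) =
      lowerT n u v w ∪
        {(((u⁻¹ ⟨r - 1, by omega⟩ : Fin n) : ℕ) + 1,
          ((u⁻¹ ⟨r, hrn⟩ : Fin n) : ℕ) + 1)} := by
  have wsplit : Stmt14.Split n r w := by
    obtain ⟨ω, hω⟩ := Stmt14.exists_reduced w
    exact Stmt14.split_of_reduced_avoids hω (fun hm => hw ⟨ω, hω, hm⟩)
  have usplit := Stmt14.split_of_le hr hrn huw wsplit
  have vsplit := Stmt14.split_of_le hr hrn hvu usplit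
  constructor
  · apply Set.ext
    intro p
    simp only [upperT, Set.mem_setOf_eq]
    exact and_congr_right fun _ => and_congr_right fun _ => and_congr_right fun _ =>
      Stmt14.key_up hr hrn usplit wsplit _
  · exact Stmt14.key_low hr hrn hvu usplit vsplit
      (u⁻¹ ⟨r - 1, by omega⟩) (u⁻¹ ⟨r, hrn⟩)
      (Stmt14.perm_apply_inv_self u _) (Stmt14.perm_apply_inv_self u _)
end

section
/- Let u, v, w ∈ S_n with v ≤ u ≤ w in Bruhat order and let r be such that s_r ∉ supp(w). Then T̄(u s_r,[v, w s_r]) = {(s_r(i), s_r(j)) : (i,j) ∈ T̄(u,[v,w])} and T̲(u s_r,[v, w s_r]) = {(s_r(i), s_r(j)) : (i,j) ∈ T̲(u,[v,w])} ∪ {(r, r+1)}. -/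
namespace S15
variable {n : ℕ}

def prodW (n : ℕ) (W : List ℕ) : Equiv.Perm (Fin n) := (W.map (simpleT n)).prod

@[simp] lemma prodW_nil : prodW n [] = 1 := rfl
@[simp] lemma prodW_cons (i : ℕ) (W : List ℕ) :
    prodW n (i :: W) = simpleT n i * prodW n W := by simp [prodW]
lemma prodW_append (W₁ W₂ : List ℕ) :
    prodW n (W₁ ++ W₂) = prodW n W₁ * prodW n W₂ := by simp [prodW]
lemma prodW_concat (W : List ℕ) (i : ℕ) :
    prodW n (W ++ [i]) = prodW n W * simpleT n i := by simp [prodW]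

def invSet (n : ℕ) (w : Equiv.Perm (Fin n)) : Finset (Fin n × Fin n) :=
  Finset.univ.filter (fun p => p.1 < p.2 ∧ w p.2 < w p.1)

def invCount (n : ℕ) (w : Equiv.Perm (Fin n)) : ℕ := (invSet n w).card

@[simp] lemma invCount_one : invCount n 1 = 0 := by
  simp only [invCount, invSet]
  rw [Finset.card_eq_zero, Finset.filter_eq_empty_iff]
  rintro ⟨x, y⟩ -
  simp only [Equiv.Perm.one_apply]
  rintro ⟨h1, h2⟩
  exact absurd h2 (not_lt.2 h1.le)

lemma swap_val_adj {a b : Fin n} (hab : (a : ℕ) + 1 = b) (z : Fin n) :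
    ((Equiv.swap a b z : Fin n) : ℕ) =
      if (z : ℕ) = a then (b : ℕ) else if (z : ℕ) = b then (a : ℕ) else z := by
  by_cases h1 : z = a
  · subst h1; rw [Equiv.swap_apply_left, if_pos rfl]
  · have h1' : (z : ℕ) ≠ a := fun h => h1 (Fin.ext h)
    by_cases h2 : z = b
    · subst h2; rw [Equiv.swap_apply_right, if_neg h1', if_pos rfl]
    · have h2' : (z : ℕ) ≠ b := fun h => h2 (Fin.ext h)
      rw [Equiv.swap_apply_of_ne_of_ne h1 h2, if_neg h1', if_neg h2']

/-- adjacent swap preserves order of all sorted pairs except `(a,b)` itself -/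
lemma swap_adj_lt {a b : Fin n} (hab : (a : ℕ) + 1 = b) {x y : Fin n} (hxy : x < y)
    (hne : ¬(x = a ∧ y = b)) : Equiv.swap a b x < Equiv.swap a b y := by
  have hxy' : (x : ℕ) < y := hxy
  have hne' : ¬((x : ℕ) = a ∧ (y : ℕ) = b) := by
    rintro ⟨h1, h2⟩; exact hne ⟨Fin.ext h1, Fin.ext h2⟩
  rw [Fin.lt_def, swap_val_adj hab, swap_val_adj hab]
  split_ifs <;> omega

lemma invCount_mul_swap_adj {a b : Fin n} (w : Equiv.Perm (Fin n)) (hab : (a : ℕ) + 1 = b)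
    (h : w a < w b) : invCount n (w * Equiv.swap a b) = invCount n w + 1 := by
  set s := Equiv.swap a b with hs
  have hEq : invSet n (w * s) =
      insert (a, b) ((invSet n w).image (fun p => (s p.1, s p.2))) := by
    refine Finset.ext ?_
    rintro ⟨p, q⟩
    simp only [invSet, Finset.mem_insert, Finset.mem_image, Finset.mem_filter]
    simp only [invSet, Finset.mem_insert, Finset.mem_image, Finset.mem_filter,
      Finset.mem_univ, true_and, Prod.mk.injEq, Prod.exists, Equiv.Perm.mul_apply]
    constructor
    · rintro ⟨hpq, hinv⟩
      by_cases hc : p = a ∧ q = b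
      · exact Or.inl ⟨hc.1, hc.2⟩
      · refine Or.inr ⟨s p, s q, ⟨swap_adj_lt hab hpq hc, ?_⟩, ?_, ?_⟩
        · simpa only [hs, Equiv.swap_apply_self] using hinv
        · simp only [hs, Equiv.swap_apply_self]
        · simp only [hs, Equiv.swap_apply_self]
    · rintro (⟨rfl, rfl⟩ | ⟨x, y, ⟨hxy, hinv⟩, rfl, rfl⟩)
      · refine ⟨Fin.lt_def.2 (by omega), ?_⟩
        rw [hs, Equiv.swap_apply_left, Equiv.swap_apply_right]; exact h
      · have hne : ¬(x = a ∧ y = b) := by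
          rintro ⟨rfl, rfl⟩
          exact absurd h (not_lt.2 hinv.le)
        refine ⟨swap_adj_lt hab hxy hne, ?_⟩
        simpa only [hs, Equiv.swap_apply_self] using hinv
  have hnotmem : (a, b) ∉ (invSet n w).image (fun p => (s p.1, s p.2)) := by
    simp only [Finset.mem_image, invSet, Finset.mem_filter, Finset.mem_univ, true_and,
      Prod.mk.injEq, Prod.exists]
    rintro ⟨x, y, ⟨hxy, hinv⟩, hxa, hyb⟩
    have hx : x = b := by
      have : s (s x) = s a := by rw [hxa]
      simpa only [hs, Equiv.swap_apply_self, Equiv.swap_apply_left] using this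
    have hy : y = a := by
      have : s (s y) = s b := by rw [hyb]
      simpa only [hs, Equiv.swap_apply_self, Equiv.swap_apply_right] using this
    rw [hx, hy] at hxy
    have h2 : (b : ℕ) < a := hxy
    omega
  have hinj : Function.Injective (fun p : Fin n × Fin n => (s p.1, s p.2)) := by
    rintro ⟨x1, y1⟩ ⟨x2, y2⟩ hp
    simp only [Prod.mk.injEq] at hp
    exact Prod.ext (s.injective hp.1) (s.injective hp.2)
  rw [invCount, hEq, Finset.card_insert_of_notMem hnotmem,
    Finset.card_image_of_injective _ hinj]
  rfl

lemma invCount_mul_swap_adj' {a b : Fin n} (w : Equiv.Perm (Fin n)) (hab : (a : ℕ) + 1 = b)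
    (h : w b < w a) : invCount n (w * Equiv.swap a b) + 1 = invCount n w := by
  have h2 : (w * Equiv.swap a b) a < (w * Equiv.swap a b) b := by
    simp only [Equiv.Perm.mul_apply, Equiv.swap_apply_left, Equiv.swap_apply_right]
    exact h
  have := invCount_mul_swap_adj (w * Equiv.swap a b) hab h2
  rw [mul_assoc, Equiv.swap_mul_self, mul_one] at this
  omega


lemma simpleT_invalid {i : ℕ} (h : ¬(1 ≤ i ∧ i < n)) : simpleT n i = 1 := by
  rw [simpleT, dif_neg h]

lemma simpleT_valid {i : ℕ} (h : 1 ≤ i ∧ i < n) :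
    simpleT n i = Equiv.swap ⟨i - 1, by omega⟩ ⟨i, h.2⟩ := by
  rw [simpleT, dif_pos h]

lemma invCount_mul_simpleT_lt (x : Equiv.Perm (Fin n)) {i : ℕ} (h : 1 ≤ i ∧ i < n)
    (hlt : x ⟨i - 1, by omega⟩ < x ⟨i, h.2⟩) :
    invCount n (x * simpleT n i) = invCount n x + 1 := by
  rw [simpleT_valid h]
  exact invCount_mul_swap_adj x (by simp; omega) hlt

lemma invCount_mul_simpleT_gt (x : Equiv.Perm (Fin n)) {i : ℕ} (h : 1 ≤ i ∧ i < n)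
    (hlt : x ⟨i, h.2⟩ < x ⟨i - 1, by omega⟩) :
    invCount n (x * simpleT n i) + 1 = invCount n x := by
  rw [simpleT_valid h]
  exact invCount_mul_swap_adj' x (by simp; omega) hlt

lemma invCount_mul_simpleT_le (x : Equiv.Perm (Fin n)) (i : ℕ) :
    invCount n (x * simpleT n i) ≤ invCount n x + 1 ∧
      invCount n x ≤ invCount n (x * simpleT n i) + 1 := by
  by_cases h : 1 ≤ i ∧ i < n
  · have hne : x ⟨i - 1, by omega⟩ ≠ x ⟨i, h.2⟩ := by
      intro hc
      have := x.injective hc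
      have := congrArg Fin.val this
      simp at this; omega
    rcases lt_or_gt_of_ne hne with hlt | hgt
    · have := invCount_mul_simpleT_lt x h hlt; omega
    · have := invCount_mul_simpleT_gt x h hgt; omega
  · rw [simpleT_invalid h, mul_one]; omega

lemma invCount_prodW_le (W : List ℕ) : invCount n (prodW n W) ≤ W.length := by
  induction W using List.reverseRecOn with
  | nil => simp
  | append_singleton W i ih =>
    rw [prodW_concat]
    have := invCount_mul_simpleT_le (prodW n W) i
    simp only [List.length_append, List.length_singleton]
    omega

lemma strictMono_eq_one {w : Equiv.Perm (Fin n)} (h : StrictMono (w : Fin n → Fin n)) :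
    w = 1 := by
  ext x
  have h2 := Fin.coe_orderIso_apply
    (StrictMono.orderIsoOfSurjective (w : Fin n → Fin n) h w.surjective) x
  rw [congrFun (StrictMono.coe_orderIsoOfSurjective (w : Fin n → Fin n) h w.surjective) x] at h2
  simpa using h2

lemma eq_one_of_no_descent (w : Equiv.Perm (Fin n))
    (h : ∀ a b : Fin n, (a : ℕ) + 1 = b → ¬ w b < w a) : w = 1 := by
  apply strictMono_eq_one
  have hstep : ∀ a b : Fin n, (a : ℕ) + 1 = b → w a < w b := by
    intro a b hab
    rcases lt_trichotomy (w a) (w b) with h1 | h1 | h1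
    · exact h1
    · exact absurd (w.injective h1) (by intro h2; have := congrArg Fin.val h2; omega)
    · exact absurd h1 (h a b hab)
  intro a b hab
  have hmono : ∀ k : ℕ, ∀ a b : Fin n, (b : ℕ) = a + k + 1 → w a < w b := by
    intro k
    induction k with
    | zero => intro a b hb; exact hstep a b (by omega)
    | succ k ih =>
      intro a b hb
      have hc : ((a : ℕ) + k + 1) < n := by have := b.isLt; omega
      exact (ih a ⟨(a : ℕ) + k + 1, hc⟩ (by simp)).trans (hstep _ b (by simp; omega))
  have hab' : (a : ℕ) < b := hab
  exact hmono ((b : ℕ) - a - 1) a b (by omega)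

lemma invCount_eq_zero {w : Equiv.Perm (Fin n)} (h : invCount n w = 0) : w = 1 := by
  apply eq_one_of_no_descent
  intro a b hab hdesc
  have hmem : (a, b) ∈ invSet n w := by
    simp only [invSet, Finset.mem_filter, Finset.mem_univ, true_and]
    exact ⟨Fin.lt_def.2 (by omega), hdesc⟩
  rw [invCount, Finset.card_eq_zero] at h
  simp [h] at hmem

lemma exists_word_inv (w : Equiv.Perm (Fin n)) :
    ∃ W : List ℕ, prodW n W = w ∧ W.length = invCount n w := by
  generalize hk : invCount n w = k
  induction k generalizing w with
  | zero => exact ⟨[], by rw [prodW_nil, invCount_eq_zero hk], rfl⟩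
  | succ k ih =>
    have hne : w ≠ 1 := by intro hc; rw [hc] at hk; simp at hk
    have hdesc : ∃ a b : Fin n, (a : ℕ) + 1 = b ∧ w b < w a := by
      by_contra hc
      push_neg at hc
      exact hne (eq_one_of_no_descent w (fun a b hab => not_lt.2 (hc a b hab)))
    obtain ⟨a, b, hab, hdesc⟩ := hdesc
    have hvalid : 1 ≤ (b : ℕ) ∧ (b : ℕ) < n := ⟨by omega, b.isLt⟩
    have hsimp : simpleT n (b : ℕ) = Equiv.swap a b := by
      rw [simpleT_valid hvalid]
      congr 1 <;> apply Fin.ext <;> simp <;> try omega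
    have hinv' : invCount n (w * Equiv.swap a b) = k := by
      have := invCount_mul_swap_adj' w hab hdesc
      omega
    obtain ⟨W', hW'p, hW'l⟩ := ih (w * Equiv.swap a b) hinv'
    refine ⟨W' ++ [(b : ℕ)], ?_, ?_⟩
    · rw [prodW_concat, hW'p, hsimp, mul_assoc, Equiv.swap_mul_self, mul_one]
    · simp only [List.length_append, List.length_singleton, hW'l]

lemma permLen_eq (w : Equiv.Perm (Fin n)) : permLen n w = invCount n w := by
  apply le_antisymm
  · obtain ⟨W, hp, hl⟩ := exists_word_inv w
    exact Nat.sInf_le ⟨W, hl, hp⟩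
  · apply le_csInf
    · obtain ⟨W, hp, hl⟩ := exists_word_inv w
      exact ⟨W.length, W, rfl, hp⟩
    · rintro l ⟨W, hlen, hprod⟩
      have : prodW n W = w := hprod
      rw [← this, ← hlen]
      exact invCount_prodW_le W


lemma invCount_lt_mul_swap_aux : ∀ (k : ℕ) {a b : Fin n} (w : Equiv.Perm (Fin n)),
    (b : ℕ) = (a : ℕ) + k + 1 → w a < w b →
    invCount n w < invCount n (w * Equiv.swap a b) := by
  intro k
  induction k with
  | zero =>
    intro a b w hab h
    rw [invCount_mul_swap_adj w (by omega) h]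
    omega
  | succ k ih =>
    intro a b w hab h
    have hcb : (b : ℕ) - 1 < n := by have := b.isLt; omega
    set c : Fin n := ⟨(b : ℕ) - 1, hcb⟩ with hc
    have hcv : (c : ℕ) = (b : ℕ) - 1 := rfl
    have hac : (c : ℕ) = (a : ℕ) + k + 1 := by omega
    have hcb1 : (c : ℕ) + 1 = (b : ℕ) := by omega
    have hanc : a ≠ c := fun hh => by have := congrArg Fin.val hh; omega
    have hanb : a ≠ b := fun hh => by have := congrArg Fin.val hh; omega
    have hcnb : c ≠ b := fun hh => by have := congrArg Fin.val hh; omega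
    have hdecomp : Equiv.swap a b = Equiv.swap c b * Equiv.swap a c * Equiv.swap c b := by
      rw [Equiv.swap_comm]
      exact (Equiv.swap_mul_swap_mul_swap hanc hanb).symm
    set w1 := w * Equiv.swap c b with hw1
    have hv1a : w1 a = w a := by
      rw [hw1, Equiv.Perm.mul_apply, Equiv.swap_apply_of_ne_of_ne hanc hanb]
    have hv1c : w1 c = w b := by
      rw [hw1, Equiv.Perm.mul_apply, Equiv.swap_apply_left]
    have hv1b : w1 b = w c := by
      rw [hw1, Equiv.Perm.mul_apply, Equiv.swap_apply_right]
    have hIH : invCount n w1 < invCount n (w1 * Equiv.swap a c) := by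
      apply ih w1 hac
      rw [hv1a, hv1c]; exact h
    set w2 := w1 * Equiv.swap a c with hw2
    have hv2c : w2 c = w a := by
      rw [hw2, Equiv.Perm.mul_apply, Equiv.swap_apply_right, hv1a]
    have hv2b : w2 b = w c := by
      rw [hw2, Equiv.Perm.mul_apply, Equiv.swap_apply_of_ne_of_ne (Ne.symm hanb) (Ne.symm hcnb), hv1b]
    have hfinal : w * Equiv.swap a b = w2 * Equiv.swap c b := by
      rw [hdecomp, hw2, hw1]; group
    rw [hfinal]
    have hwcb : w c ≠ w b := fun hh => hcnb (w.injective hh)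
    rcases lt_or_gt_of_ne hwcb with h1 | h1
    · -- w c < w b : invCount w1 = invCount w + 1
      have e1 : invCount n w1 = invCount n w + 1 := invCount_mul_swap_adj w hcb1 h1
      rcases lt_trichotomy (w2 c) (w2 b) with h2 | h2 | h2
      · have e2 := invCount_mul_swap_adj w2 hcb1 h2; omega
      · exact absurd (w2.injective h2) hcnb
      · have e2 := invCount_mul_swap_adj' w2 hcb1 h2; omega
    · -- w c > w b : then w a < w b < w c so w2 c < w2 b
      have e1 : invCount n w1 + 1 = invCount n w := invCount_mul_swap_adj' w hcb1 h1
      have h2 : w2 c < w2 b := by rw [hv2c, hv2b]; exact h.trans h1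
      have e2 := invCount_mul_swap_adj w2 hcb1 h2
      omega

lemma invCount_lt_swap {a b : Fin n} (w : Equiv.Perm (Fin n)) (hab : a < b) (h : w a < w b) :
    invCount n w < invCount n (w * Equiv.swap a b) := by
  have hab' : (a : ℕ) < b := hab
  exact invCount_lt_mul_swap_aux ((b : ℕ) - a - 1) w (by omega) h

lemma invCount_swap_lt {a b : Fin n} (w : Equiv.Perm (Fin n)) (hab : a < b) (h : w b < w a) :
    invCount n (w * Equiv.swap a b) < invCount n w := by
  have h2 : (w * Equiv.swap a b) a < (w * Equiv.swap a b) b := by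
    simp only [Equiv.Perm.mul_apply, Equiv.swap_apply_left, Equiv.swap_apply_right]
    exact h
  have := invCount_lt_swap (w * Equiv.swap a b) hab h2
  rwa [mul_assoc, Equiv.swap_mul_self, mul_one] at this

lemma invCount_add_three_le {a c b : Fin n} (w : Equiv.Perm (Fin n)) (hac : a < c) (hcb : c < b)
    (h1 : w a < w c) (h2 : w c < w b) :
    invCount n w + 3 ≤ invCount n (w * Equiv.swap a b) := by
  have hanc : a ≠ c := hac.ne
  have hanb : a ≠ b := (hac.trans hcb).ne
  have hcnb : c ≠ b := hcb.ne
  have hdecomp : Equiv.swap a b = Equiv.swap a c * Equiv.swap c b * Equiv.swap a c := by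
    have h3 := Equiv.swap_apply_apply (Equiv.swap a c) c b
    rw [Equiv.swap_apply_right, Equiv.swap_apply_of_ne_of_ne (Ne.symm hanb) (Ne.symm hcnb),
      Equiv.swap_inv] at h3
    exact h3
  set w1 := w * Equiv.swap a c with hw1
  have hv1a : w1 a = w c := by rw [hw1, Equiv.Perm.mul_apply, Equiv.swap_apply_left]
  have hv1c : w1 c = w a := by rw [hw1, Equiv.Perm.mul_apply, Equiv.swap_apply_right]
  have hv1b : w1 b = w b := by
    rw [hw1, Equiv.Perm.mul_apply, Equiv.swap_apply_of_ne_of_ne (Ne.symm hanb) (Ne.symm hcnb)]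
  have s1 : invCount n w < invCount n w1 := invCount_lt_swap w hac h1
  set w2 := w1 * Equiv.swap c b with hw2
  have s2 : invCount n w1 < invCount n w2 := by
    apply invCount_lt_swap w1 hcb
    rw [hv1c, hv1b]; exact h1.trans h2
  have hv2a : w2 a = w c := by
    rw [hw2, Equiv.Perm.mul_apply, Equiv.swap_apply_of_ne_of_ne hanc hanb, hv1a]
  have hv2c : w2 c = w b := by
    rw [hw2, Equiv.Perm.mul_apply, Equiv.swap_apply_left, hv1b]
  have s3 : invCount n w2 < invCount n (w2 * Equiv.swap a c) := by
    apply invCount_lt_swap w2 hac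
    rw [hv2a, hv2c]; exact h2
  have hfinal : w * Equiv.swap a b = w2 * Equiv.swap a c := by
    rw [hdecomp, hw2, hw1]; group
  rw [hfinal]; omega

lemma strong_exchange : ∀ (W : List ℕ) (a b : Fin n), a < b →
    (prodW n W) b < (prodW n W) a →
    ∃ k < W.length, prodW n (W.eraseIdx k) = prodW n W * Equiv.swap a b := by
  intro W
  induction W with
  | nil =>
    intro a b hab h
    simp only [prodW_nil, Equiv.Perm.one_apply] at h
    exact absurd h (not_lt.2 hab.le)
  | cons i W' ih =>
    intro a b hab h
    rw [prodW_cons] at h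
    set w' := prodW n W' with hw'
    rcases lt_trichotomy (w' a) (w' b) with h1 | h1 | h1
    · by_cases hval : 1 ≤ i ∧ i < n
      · set c : Fin n := ⟨i - 1, by omega⟩ with hcdef
        set d : Fin n := ⟨i, hval.2⟩ with hddef
        have hcd : (c : ℕ) + 1 = d := by simp [hcdef, hddef]; omega
        have hs : simpleT n i = Equiv.swap c d := simpleT_valid hval
        have hflip : ¬ (Equiv.swap c d (w' a) < Equiv.swap c d (w' b)) := by
          have h2 : Equiv.swap c d (w' b) < Equiv.swap c d (w' a) := by
            simpa only [hs, Equiv.Perm.mul_apply] using h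
          exact not_lt.2 h2.le
        have hcase : w' a = c ∧ w' b = d := by
          by_contra hcon
          exact hflip (swap_adj_lt hcd h1 hcon)
        have hkey : simpleT n i * w' = w' * Equiv.swap a b := by
          rw [hs, ← hcase.1, ← hcase.2, Equiv.swap_apply_apply, mul_assoc,
            inv_mul_cancel, mul_one]
        refine ⟨0, by simp, ?_⟩
        show prodW n W' = prodW n (i :: W') * Equiv.swap a b
        rw [prodW_cons, hkey, mul_assoc, Equiv.swap_mul_self, mul_one, hw']
      · rw [simpleT_invalid hval, one_mul] at h
        exact absurd h (not_lt.2 h1.le)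
    · exact absurd (w'.injective h1) hab.ne
    · obtain ⟨k, hk, hek⟩ := ih a b hab h1
      refine ⟨k + 1, by simpa using Nat.succ_lt_succ hk, ?_⟩
      rw [List.eraseIdx_cons_succ, prodW_cons, prodW_cons, hek, mul_assoc]

lemma exists_reduced_sublist_aux : ∀ (m : ℕ) (W : List ℕ), W.length ≤ m →
    ∃ V, V.Sublist W ∧ prodW n V = prodW n W ∧ V.length = invCount n (prodW n W) := by
  intro m
  induction m with
  | zero =>
    intro W hlen
    have : W = [] := List.length_eq_zero_iff.1 (Nat.le_zero.1 hlen)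
    subst this
    exact ⟨[], List.Sublist.refl _, rfl, by simp⟩
  | succ m ih =>
    intro W hlen
    by_cases hred : W.length = invCount n (prodW n W)
    · exact ⟨W, List.Sublist.refl _, rfl, hred ▸ rfl⟩
    rcases List.eq_nil_or_concat W with rfl | ⟨W₁, i, rfl⟩
    · simp at hred
    rw [List.concat_eq_append] at *
    by_cases hred1 : W₁.length = invCount n (prodW n W₁)
    · by_cases hval : 1 ≤ i ∧ i < n
      · set w₁ := prodW n W₁ with hw₁
        set c : Fin n := ⟨i - 1, by omega⟩ with hcdef
        set d : Fin n := ⟨i, hval.2⟩ with hddef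
        rcases lt_trichotomy (w₁ c) (w₁ d) with h1 | h1 | h1
        · exfalso
          apply hred
          have h2 := invCount_mul_simpleT_lt w₁ hval h1
          rw [← prodW_concat] at h2
          rw [h2, List.length_append, List.length_singleton, ← hred1]
        · exact absurd (w₁.injective h1)
            (fun hh => by have := congrArg Fin.val hh; simp [hcdef, hddef] at this; omega)
        · have hcd : c < d := by rw [Fin.lt_def]; simp [hcdef, hddef]; omega
          obtain ⟨k, hk, hek⟩ := strong_exchange W₁ c d hcd h1
          have heq : prodW n (W₁.eraseIdx k) = prodW n (W₁ ++ [i]) := by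
            rw [hek, prodW_concat, simpleT_valid hval]
          have hlen2 : (W₁.eraseIdx k).length ≤ m := by
            have h3 := (List.eraseIdx_sublist W₁ k).length_le
            have h4 : W₁.length + 1 ≤ m + 1 := by
              simpa using hlen
            have h5 : (W₁.eraseIdx k).length = W₁.length - 1 :=
              List.length_eraseIdx_of_lt hk
            omega
          obtain ⟨V, hVsub, hVp, hVl⟩ := ih (W₁.eraseIdx k) hlen2
          exact ⟨V, hVsub.trans ((List.eraseIdx_sublist W₁ k).trans
            (List.sublist_append_left W₁ [i])), by rw [hVp, heq], by rw [hVl, heq]⟩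
      · have heq : prodW n (W₁ ++ [i]) = prodW n W₁ := by
          rw [prodW_concat, simpleT_invalid hval, mul_one]
        exact ⟨W₁, List.sublist_append_left W₁ [i], heq.symm,
          by rw [heq, ← hred1]⟩
    · have hlen1 : W₁.length ≤ m := by
        rw [List.length_append, List.length_singleton] at hlen; omega
      obtain ⟨V₁, hV₁sub, hV₁p, hV₁l⟩ := ih W₁ hlen1
      have hlt1 : invCount n (prodW n W₁) < W₁.length :=
        lt_of_le_of_ne (invCount_prodW_le W₁) (fun hh => hred1 hh.symm)
      have hlen2 : (V₁ ++ [i]).length ≤ m := by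
        rw [List.length_append, List.length_singleton, hV₁l]; omega
      obtain ⟨V, hVsub, hVp, hVl⟩ := ih (V₁ ++ [i]) hlen2
      have hprod : prodW n (V₁ ++ [i]) = prodW n (W₁ ++ [i]) := by
        rw [prodW_concat, prodW_concat, hV₁p]
      exact ⟨V, hVsub.trans (hV₁sub.append_right [i]), by rw [hVp, hprod],
        by rw [hVl, hprod]⟩

lemma exists_reduced_sublist (W : List ℕ) :
    ∃ V, V.Sublist W ∧ prodW n V = prodW n W ∧ V.length = invCount n (prodW n W) :=
  exists_reduced_sublist_aux W.length W le_rfl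


lemma isRed_iff (W : List ℕ) (w : Equiv.Perm (Fin n)) :
    IsReducedWord n W w ↔ prodW n W = w ∧ W.length = invCount n w := by
  rw [IsReducedWord, permLen_eq]
  exact Iff.rfl

lemma exists_reduced (w : Equiv.Perm (Fin n)) : ∃ W, IsReducedWord n W w := by
  obtain ⟨W, h1, h2⟩ := exists_word_inv w
  exact ⟨W, (isRed_iff W w).2 ⟨h1, h2⟩⟩

lemma reduced_concat {W₁ : List ℕ} {i : ℕ}
    (h : (W₁ ++ [i]).length = invCount n (prodW n (W₁ ++ [i]))) :
    (1 ≤ i ∧ i < n) ∧ W₁.length = invCount n (prodW n W₁) ∧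
      invCount n (prodW n (W₁ ++ [i])) = invCount n (prodW n W₁) + 1 := by
  have hle := invCount_prodW_le (n := n) W₁
  have hmul := invCount_mul_simpleT_le (prodW n W₁) i
  rw [← prodW_concat] at hmul
  rw [List.length_append, List.length_singleton] at h
  by_cases hval : 1 ≤ i ∧ i < n
  · exact ⟨hval, by omega, by omega⟩
  · exfalso
    have : prodW n (W₁ ++ [i]) = prodW n W₁ := by
      rw [prodW_concat, simpleT_invalid hval, mul_one]
    rw [this] at h
    omega

lemma reduced_concat_lt {W₁ : List ℕ} {i : ℕ}
    (h : (W₁ ++ [i]).length = invCount n (prodW n (W₁ ++ [i]))) (hval : 1 ≤ i ∧ i < n) :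
    (prodW n W₁) ⟨i - 1, by omega⟩ < (prodW n W₁) ⟨i, hval.2⟩ := by
  obtain ⟨-, hred1, hinc⟩ := reduced_concat h
  rcases lt_trichotomy ((prodW n W₁) ⟨i - 1, by omega⟩) ((prodW n W₁) ⟨i, hval.2⟩) with
    h1 | h1 | h1
  · exact h1
  · exact absurd ((prodW n W₁).injective h1)
      (fun hh => by have := congrArg Fin.val hh; simp at this; omega)
  · exfalso
    have := invCount_mul_simpleT_gt (prodW n W₁) hval h1
    rw [← prodW_concat] at this
    omega

def BruStep (n : ℕ) (x y : Equiv.Perm (Fin n)) : Prop :=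
  ∃ a b : Fin n, a < b ∧ x a < x b ∧ y = x * Equiv.swap a b

def Bru (n : ℕ) : Equiv.Perm (Fin n) → Equiv.Perm (Fin n) → Prop :=
  Relation.ReflTransGen (BruStep n)

lemma bru_invCount_le {x y : Equiv.Perm (Fin n)} (h : Bru n x y) :
    invCount n x ≤ invCount n y := by
  induction h with
  | refl => exact le_rfl
  | tail hxz hzy ih =>
    obtain ⟨a, b, hab, hz, rfl⟩ := hzy
    exact ih.trans (invCount_lt_swap _ hab hz).le

lemma bru_subword {v w : Equiv.Perm (Fin n)} (h : Bru n v w) :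
    ∀ W : List ℕ, prodW n W = w → W.length = invCount n w →
    ∃ V, V.Sublist W ∧ prodW n V = v ∧ V.length = invCount n v := by
  induction h with
  | refl =>
    intro W h1 h2
    exact ⟨W, List.Sublist.refl _, h1, h2⟩
  | @tail z y hvz hzy ih =>
    intro W hWp hWl
    obtain ⟨a, b, hab, hz, rfl⟩ := hzy
    have hyba : (prodW n W) b < (prodW n W) a := by
      rw [hWp]
      simp only [Equiv.Perm.mul_apply, Equiv.swap_apply_left, Equiv.swap_apply_right]
      exact hz
    obtain ⟨k, hk, hek⟩ := strong_exchange W a b hab hyba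
    have hz' : prodW n (W.eraseIdx k) = z := by
      rw [hek, hWp, mul_assoc, Equiv.swap_mul_self, mul_one]
    obtain ⟨V', hV'sub, hV'p, hV'l⟩ := exists_reduced_sublist (W.eraseIdx k)
    obtain ⟨V, hVsub, hVp, hVl⟩ := ih V' (by rw [hV'p, hz']) (by rw [hV'l, hz'])
    exact ⟨V, hVsub.trans (hV'sub.trans (List.eraseIdx_sublist W k)), hVp, hVl⟩

lemma diamond {z : Equiv.Perm (Fin n)} {a b c d : Fin n}
    (hab : a < b) (hz : z a < z b)
    (hcd : (c : ℕ) + 1 = d)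
    (hlen : invCount n (z * Equiv.swap a b) = invCount n z + 1)
    (hzc : z c < z d)
    (hyc : (z * Equiv.swap a b) d < (z * Equiv.swap a b) c) :
    z * Equiv.swap a b = z * Equiv.swap c d := by
  have hval : ∀ x : Fin n, (z * Equiv.swap a b) x = z (Equiv.swap a b x) := fun x => rfl
  have hab' : (a : ℕ) < b := hab
  by_cases hca : c = a
  · by_cases hdb : d = b
    · rw [hca, hdb]
    · exfalso
      have hda : d ≠ a := fun hh => by
        have h0 := congrArg Fin.val hh
        have h1 : (c : ℕ) = a := congrArg Fin.val hca
        omega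
      have hdb' : (d : ℕ) ≠ b := fun hh => hdb (Fin.ext hh)
      have hyd : (z * Equiv.swap a b) d = z d := by
        rw [hval, Equiv.swap_apply_of_ne_of_ne hda hdb]
      have hyc2 : (z * Equiv.swap a b) c = z b := by
        rw [hval, hca, Equiv.swap_apply_left]
      rw [hyd, hyc2] at hyc
      have h1 : (c : ℕ) = a := congrArg Fin.val hca
      have had : a < d := Fin.lt_def.2 (by omega)
      have hdvb : d < b := Fin.lt_def.2 (by omega)
      have h3 := invCount_add_three_le z had hdvb (hca ▸ hzc) hyc
      omega
  · by_cases hdb : d = b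
    · exfalso
      have hdv : (d : ℕ) = b := congrArg Fin.val hdb
      have hcb : c ≠ b := fun hh => by have := congrArg Fin.val hh; omega
      have hca' : (c : ℕ) ≠ a := fun hh => hca (Fin.ext hh)
      have hyc2 : (z * Equiv.swap a b) c = z c := by
        rw [hval, Equiv.swap_apply_of_ne_of_ne hca hcb]
      have hyd : (z * Equiv.swap a b) d = z a := by
        rw [hval, hdb, Equiv.swap_apply_right]
      rw [hyc2, hyd] at hyc
      have hac : a < c := Fin.lt_def.2 (by omega)
      have hcb2 : c < b := Fin.lt_def.2 (by omega)
      have h3 := invCount_add_three_le z hac hcb2 hyc (hdb ▸ hzc)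
      omega
    · exfalso
      by_cases hcb : c = b
      · have hcv : (c : ℕ) = b := congrArg Fin.val hcb
        have hda : d ≠ a := fun hh => by have := congrArg Fin.val hh; omega
        have hdb' : d ≠ b := fun hh => by have := congrArg Fin.val hh; omega
        have hyc2 : (z * Equiv.swap a b) c = z a := by
          rw [hval, hcb, Equiv.swap_apply_right]
        have hyd : (z * Equiv.swap a b) d = z d := by
          rw [hval, Equiv.swap_apply_of_ne_of_ne hda hdb']
        rw [hyc2, hyd] at hyc
        have hzbc : z b = z c := by rw [hcb]
        have : z a < z d := hz.trans_le (hzbc.le.trans hzc.le)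
        exact absurd this (not_lt.2 hyc.le)
      · by_cases hda : d = a
        · have hyc2 : (z * Equiv.swap a b) c = z c := by
            rw [hval, Equiv.swap_apply_of_ne_of_ne hca hcb]
          have hyd : (z * Equiv.swap a b) d = z b := by
            rw [hval, hda, Equiv.swap_apply_left]
          rw [hyc2, hyd] at hyc
          have hzda : z d = z a := by rw [hda]
          have : z c < z b := hzc.trans_le (hzda.le.trans hz.le)
          exact absurd this (not_lt.2 hyc.le)
        · have hyc2 : (z * Equiv.swap a b) c = z c := by
            rw [hval, Equiv.swap_apply_of_ne_of_ne hca hcb]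
          have hyd : (z * Equiv.swap a b) d = z d := by
            rw [hval, Equiv.swap_apply_of_ne_of_ne hda hdb]
          rw [hyc2, hyd] at hyc
          exact absurd hzc (not_lt.2 hyc.le)

lemma bru_step_right {x y : Equiv.Perm (Fin n)} (h : Bru n x y) (i : ℕ) :
    Bru n (x * simpleT n i) y ∨ Bru n (x * simpleT n i) (y * simpleT n i) := by
  by_cases hval : 1 ≤ i ∧ i < n
  case neg =>
    rw [simpleT_invalid hval, mul_one]
    exact Or.inl h
  induction h with
  | refl => exact Or.inr Relation.ReflTransGen.refl
  | @tail z y hxz hzy ih =>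
    rcases ih with ih | ih
    · exact Or.inl (ih.tail hzy)
    · obtain ⟨a, b, hab, hza, rfl⟩ := hzy
      have hc' : i - 1 < n := by omega
      have hcd : ((⟨i - 1, hc'⟩ : Fin n) : ℕ) + 1 = ((⟨i, hval.2⟩ : Fin n) : ℕ) := by
        simp; omega
      have hsw : simpleT n i = Equiv.swap ⟨i - 1, hc'⟩ ⟨i, hval.2⟩ := simpleT_valid hval
      have hss : simpleT n i * simpleT n i = 1 := by rw [hsw, Equiv.swap_mul_self]
      have hconj : z * Equiv.swap a b * simpleT n i =
          z * simpleT n i * Equiv.swap (simpleT n i a) (simpleT n i b) := by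
        rw [Equiv.swap_apply_apply (simpleT n i) a b]
        have hsinv : (simpleT n i)⁻¹ = simpleT n i := by rw [hsw, Equiv.swap_inv]
        rw [hsinv, ← mul_assoc, ← mul_assoc, mul_assoc z (simpleT n i) (simpleT n i),
          hss, mul_one]
      have hvza : (z * simpleT n i) (simpleT n i a) = z a := by
        simp only [Equiv.Perm.mul_apply, hsw, Equiv.swap_apply_self]
      have hvzb : (z * simpleT n i) (simpleT n i b) = z b := by
        simp only [Equiv.Perm.mul_apply, hsw, Equiv.swap_apply_self]
      rcases lt_trichotomy (simpleT n i a) (simpleT n i b) with hlt | heq | hgt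
      · refine Or.inr (ih.tail ?_)
        refine ⟨simpleT n i a, simpleT n i b, hlt, ?_, hconj⟩
        rw [hvza, hvzb]; exact hza
      · exact absurd ((simpleT n i).injective heq) hab.ne
      · -- descent case
        have hstep : (z * simpleT n i) (simpleT n i a) < (z * simpleT n i) (simpleT n i b) := by
          rw [hvza, hvzb]; exact hza
        have hinvY : invCount n (z * Equiv.swap a b * simpleT n i) <
            invCount n (z * simpleT n i) := by
          rw [hconj, Equiv.swap_comm]
          exact invCount_swap_lt (z * simpleT n i) hgt hstep
        have hinvzy : invCount n z < invCount n (z * Equiv.swap a b) :=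
          invCount_lt_swap z hab hza
        have hzne : z ⟨i - 1, hc'⟩ ≠ z ⟨i, hval.2⟩ := fun hh => by
          have := congrArg Fin.val (z.injective hh); simp at this; omega
        have hyne : (z * Equiv.swap a b) ⟨i - 1, hc'⟩ ≠ (z * Equiv.swap a b) ⟨i, hval.2⟩ :=
          fun hh => by
            have := congrArg Fin.val ((z * Equiv.swap a b).injective hh)
            simp at this; omega
        have hzcd : z ⟨i - 1, hc'⟩ < z ⟨i, hval.2⟩ := by
          rcases lt_or_gt_of_ne hzne with h1 | h1
          · exact h1
          · exfalso
            have e1 : invCount n (z * simpleT n i) + 1 = invCount n z := by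
              rw [hsw]; exact invCount_mul_swap_adj' z hcd h1
            have e2 := (invCount_mul_simpleT_le (z * Equiv.swap a b) i).2
            omega
        have e1 : invCount n (z * simpleT n i) = invCount n z + 1 := by
          rw [hsw]; exact invCount_mul_swap_adj z hcd hzcd
        have hycd : (z * Equiv.swap a b) ⟨i, hval.2⟩ < (z * Equiv.swap a b) ⟨i - 1, hc'⟩ := by
          rcases lt_or_gt_of_ne hyne with h1 | h1
          · exfalso
            have e2 : invCount n (z * Equiv.swap a b * simpleT n i) =
                invCount n (z * Equiv.swap a b) + 1 := by
              rw [hsw]; exact invCount_mul_swap_adj (z * Equiv.swap a b) hcd h1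
            omega
          · exact h1
        have e2 : invCount n (z * Equiv.swap a b * simpleT n i) + 1 =
            invCount n (z * Equiv.swap a b) := by
          rw [hsw]; exact invCount_mul_swap_adj' (z * Equiv.swap a b) hcd hycd
        have hlen : invCount n (z * Equiv.swap a b) = invCount n z + 1 := by omega
        have hdia := diamond hab hza hcd hlen hzcd hycd
        rw [← hsw] at hdia
        rw [hdia]
        exact Or.inl ih

lemma bru_of_sublist : ∀ (W V : List ℕ), V.Sublist W →
    W.length = invCount n (prodW n W) → Bru n (prodW n V) (prodW n W) := by
  intro W
  induction W using List.reverseRecOn with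
  | nil =>
    intro V hV _
    rw [List.sublist_nil.1 hV]
    exact Relation.ReflTransGen.refl
  | append_singleton W₁ i ih =>
    intro V hV hred
    obtain ⟨hval, hred1, hinc⟩ := reduced_concat hred
    have hlt := reduced_concat_lt hred hval
    have hstep : BruStep n (prodW n W₁) (prodW n (W₁ ++ [i])) := by
      refine ⟨⟨i - 1, by omega⟩, ⟨i, hval.2⟩, by rw [Fin.lt_def]; simp; omega, hlt, ?_⟩
      rw [prodW_concat, simpleT_valid hval]
    rcases List.sublist_append_iff.1 hV with ⟨e1, e2, rfl, he1, he2⟩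
    rcases List.sublist_singleton.1 he2 with rfl | rfl
    · rw [List.append_nil]
      exact (ih e1 he1 hred1).tail hstep
    · have hb := ih e1 he1 hred1
      rcases bru_step_right hb i with h | h
      · rw [prodW_concat]
        exact (h.tail hstep)
      · rw [prodW_concat, prodW_concat]
        exact h

lemma bruhatLE_iff {v w : Equiv.Perm (Fin n)} : bruhatLE n v w ↔ Bru n v w := by
  constructor
  · rintro ⟨Wv, Ww, hv, hw, hsub⟩
    rw [isRed_iff] at hv hw
    have := bru_of_sublist Ww Wv hsub (by rw [hw.1]; exact hw.2)
    rwa [hv.1, hw.1] at this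
  · intro h
    obtain ⟨W, hW⟩ := exists_reduced w
    rw [isRed_iff] at hW
    obtain ⟨V, hsub, h1, h2⟩ := bru_subword h W hW.1 hW.2
    exact ⟨V, W, (isRed_iff V v).2 ⟨h1, h2⟩, (isRed_iff W w).2 hW, hsub⟩

lemma bruhatLE_forall {v w : Equiv.Perm (Fin n)} (h : bruhatLE n v w) :
    ∀ W, IsReducedWord n W w → ∃ V, IsReducedWord n V v ∧ V.Sublist W := by
  intro W hW
  rw [isRed_iff] at hW
  obtain ⟨V, hsub, h1, h2⟩ := bru_subword (bruhatLE_iff.1 h) W hW.1 hW.2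
  exact ⟨V, (isRed_iff V v).2 ⟨h1, h2⟩, hsub⟩

lemma bruhatLE_refl (v : Equiv.Perm (Fin n)) : bruhatLE n v v :=
  bruhatLE_iff.2 Relation.ReflTransGen.refl

lemma bruhatLE_trans {u v w : Equiv.Perm (Fin n)} (h1 : bruhatLE n u v)
    (h2 : bruhatLE n v w) : bruhatLE n u w :=
  bruhatLE_iff.2 ((bruhatLE_iff.1 h1).trans (bruhatLE_iff.1 h2))

lemma bruhatLE_len_le {v w : Equiv.Perm (Fin n)} (h : bruhatLE n v w) :
    invCount n v ≤ invCount n w :=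
  bru_invCount_le (bruhatLE_iff.1 h)

lemma bruhatLE_eq_of_len {v w : Equiv.Perm (Fin n)} (h : bruhatLE n v w)
    (hl : invCount n v = invCount n w) : v = w := by
  obtain ⟨Wv, Ww, hv, hw, hsub⟩ := h
  rw [isRed_iff] at hv hw
  have : Wv = Ww := hsub.eq_of_length (by rw [hv.2, hw.2, hl])
  rw [← hv.1, ← hw.1, this]


def PresA (n r : ℕ) (x : Equiv.Perm (Fin n)) : Prop :=
  ∀ p : Fin n, (p : ℕ) < r → ((x p : Fin n) : ℕ) < r

lemma presA_of_rfree {r : ℕ} {W : List ℕ} (hW : r ∉ W) : PresA n r (prodW n W) := by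
  induction W with
  | nil => intro p hp; simpa using hp
  | cons i W' ih =>
    intro p hp
    have hi : i ≠ r := fun hh => hW (by simp [hh])
    have hW' : r ∉ W' := fun hh => hW (List.mem_cons_of_mem _ hh)
    have hp' := ih hW' p hp
    rw [prodW_cons, Equiv.Perm.mul_apply]
    by_cases hval : 1 ≤ i ∧ i < n
    · rw [simpleT_valid hval]
      have hv := swap_val_adj (a := ⟨i - 1, by omega⟩) (b := ⟨i, hval.2⟩)
        (by simp; omega) (prodW n W' p)
      rw [hv]
      simp only []
      split_ifs <;> omega
    · rw [simpleT_invalid hval]; simpa using hp'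

lemma presA_ge {r : ℕ} {x : Equiv.Perm (Fin n)} (hx : PresA n r x) :
    ∀ p : Fin n, r ≤ (p : ℕ) → r ≤ ((x p : Fin n) : ℕ) := by
  intro p hp
  by_contra hc
  push_neg at hc
  have hsub : (Finset.univ.filter (fun q : Fin n => (q : ℕ) < r)).image x ⊆
      Finset.univ.filter (fun q : Fin n => (q : ℕ) < r) := by
    intro q hq
    simp only [Finset.mem_image, Finset.mem_filter, Finset.mem_univ, true_and] at hq ⊢
    obtain ⟨a, ha, rfl⟩ := hq
    exact hx a ha
  have hcard : ((Finset.univ.filter (fun q : Fin n => (q : ℕ) < r)).image x).card =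
      (Finset.univ.filter (fun q : Fin n => (q : ℕ) < r)).card :=
    Finset.card_image_of_injective _ x.injective
  have heq := Finset.eq_of_subset_of_card_le hsub (le_of_eq hcard.symm)
  have hmem : x p ∈ (Finset.univ.filter (fun q : Fin n => (q : ℕ) < r)).image x := by
    rw [heq]
    simp only [Finset.mem_filter, Finset.mem_univ, true_and]
    exact hc
  simp only [Finset.mem_image, Finset.mem_filter, Finset.mem_univ, true_and] at hmem
  obtain ⟨a, ha, hax⟩ := hmem
  have := x.injective hax
  subst this
  omega

variable {r : ℕ}

lemma t_apply_low (hr : 1 ≤ r) (hrn : r < n) : simpleT n r ⟨r - 1, by omega⟩ = ⟨r, hrn⟩ := by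
  rw [simpleT_valid ⟨hr, hrn⟩]
  exact Equiv.swap_apply_left _ _

lemma not_presA_mul_t (hr : 1 ≤ r) (hrn : r < n) {x : Equiv.Perm (Fin n)} (hx : PresA n r x) :
    ¬ PresA n r (x * simpleT n r) := by
  intro hc
  have h1 := hc ⟨r - 1, by omega⟩ (by simp; omega)
  rw [Equiv.Perm.mul_apply, t_apply_low hr hrn] at h1
  have h2 := presA_ge hx ⟨r, hrn⟩ (by simp)
  omega

lemma len_mul_t (hr : 1 ≤ r) (hrn : r < n) {x : Equiv.Perm (Fin n)} (hx : PresA n r x) :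
    invCount n (x * simpleT n r) = invCount n x + 1 := by
  apply invCount_mul_simpleT_lt x ⟨hr, hrn⟩
  rw [Fin.lt_def]
  exact lt_of_lt_of_le (hx ⟨r - 1, by omega⟩ (by simp; omega))
    (presA_ge hx ⟨r, hrn⟩ (by simp))

lemma red_concat_t (hr : 1 ≤ r) (hrn : r < n) {x : Equiv.Perm (Fin n)} {E : List ℕ}
    (hE : IsReducedWord n E x) (hrE : r ∉ E) :
    IsReducedWord n (E ++ [r]) (x * simpleT n r) := by
  rw [isRed_iff] at hE ⊢
  have hpres : PresA n r x := hE.1 ▸ presA_of_rfree hrE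
  constructor
  · rw [prodW_concat, hE.1]
  · rw [List.length_append, List.length_singleton, hE.2, len_mul_t hr hrn hpres]

lemma master (hr : 1 ≤ r) (hrn : r < n) {z y : Equiv.Perm (Fin n)} {B : List ℕ}
    (hB : IsReducedWord n B y) (hrB : r ∉ B)
    (hzy : bruhatLE n z (y * simpleT n r)) :
    (∃ E, IsReducedWord n E z ∧ r ∉ E ∧ bruhatLE n z y) ∨
    (∃ x E, IsReducedWord n E x ∧ r ∉ E ∧ bruhatLE n x y ∧ z = x * simpleT n r ∧
      invCount n z = invCount n x + 1) := by
  have hBt : IsReducedWord n (B ++ [r]) (y * simpleT n r) := red_concat_t hr hrn hB hrB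
  obtain ⟨A, hA, hAsub⟩ := bruhatLE_forall hzy (B ++ [r]) hBt
  rcases List.sublist_append_iff.1 hAsub with ⟨e1, e2, heq, he1, he2⟩
  rcases List.sublist_singleton.1 he2 with rfl | rfl
  · left
    rw [List.append_nil] at heq
    rw [heq] at hA
    exact ⟨e1, hA, fun hh => hrB (he1.subset hh), ⟨e1, B, hA, hB, he1⟩⟩
  · right
    subst heq
    rw [isRed_iff] at hA
    have hre1 : r ∉ e1 := fun hh => hrB (he1.subset hh)
    have hxp : PresA n r (prodW n e1) := presA_of_rfree hre1
    have hlen_zx : invCount n (prodW n e1 * simpleT n r) = invCount n (prodW n e1) + 1 :=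
      len_mul_t hr hrn hxp
    have hz : z = prodW n e1 * simpleT n r := by rw [← hA.1, prodW_concat]
    have hle : invCount n (prodW n e1) ≤ e1.length := invCount_prodW_le e1
    have hAlen : e1.length + 1 = invCount n z := by
      have := hA.2
      rw [List.length_append, List.length_singleton] at this
      omega
    have hzz : invCount n z = invCount n (prodW n e1) + 1 := by rw [hz, hlen_zx]
    have he1red : IsReducedWord n e1 (prodW n e1) :=
      (isRed_iff _ _).2 ⟨rfl, by omega⟩
    exact ⟨prodW n e1, e1, he1red, hre1, ⟨e1, B, he1red, hB, he1⟩, hz,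
      by rw [hz, hlen_zx]⟩

lemma le_mul_t_self (hr : 1 ≤ r) (hrn : r < n) {x : Equiv.Perm (Fin n)} {E : List ℕ}
    (hE : IsReducedWord n E x) (hrE : r ∉ E) :
    bruhatLE n x (x * simpleT n r) :=
  ⟨E, E ++ [r], hE, red_concat_t hr hrn hE hrE, List.sublist_append_left E [r]⟩

lemma bruhat_mul_t_mono (hr : 1 ≤ r) (hrn : r < n) {x y : Equiv.Perm (Fin n)} {B : List ℕ}
    (hB : IsReducedWord n B y) (hrB : r ∉ B) (hxy : bruhatLE n x y) :
    bruhatLE n (x * simpleT n r) (y * simpleT n r) := by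
  obtain ⟨V, hV, hVsub⟩ := bruhatLE_forall hxy B hB
  have hrV : r ∉ V := fun hh => hrB (hVsub.subset hh)
  exact ⟨V ++ [r], B ++ [r], red_concat_t hr hrn hV hrV, red_concat_t hr hrn hB hrB,
    hVsub.append_right [r]⟩

lemma bruhat_of_mul_t (hr : 1 ≤ r) (hrn : r < n) {x y : Equiv.Perm (Fin n)} {B : List ℕ}
    (hB : IsReducedWord n B y) (hrB : r ∉ B) (hx : PresA n r x)
    (h : bruhatLE n (x * simpleT n r) (y * simpleT n r)) : bruhatLE n x y := by
  rcases master hr hrn hB hrB h with ⟨E, hE, hrE, _⟩ | ⟨x', E, hE, hrE, hle, heq, _⟩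
  · exfalso
    rw [isRed_iff] at hE
    exact not_presA_mul_t hr hrn hx (hE.1 ▸ presA_of_rfree hrE)
  · have hxx : x = x' := mul_right_cancel heq
    rw [hxx]
    exact hle

lemma bruhat_of_le_mul_t (hr : 1 ≤ r) (hrn : r < n) {x y : Equiv.Perm (Fin n)} {B : List ℕ}
    (hB : IsReducedWord n B y) (hrB : r ∉ B) (hx : PresA n r x)
    (h : bruhatLE n x (y * simpleT n r)) : bruhatLE n x y := by
  rcases master hr hrn hB hrB h with ⟨E, hE, hrE, hle⟩ | ⟨x', E, hE, hrE, _, heq, _⟩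
  · exact hle
  · exfalso
    rw [isRed_iff] at hE
    exact not_presA_mul_t hr hrn (hE.1 ▸ presA_of_rfree hrE) (heq ▸ hx)

lemma not_mul_t_le (hr : 1 ≤ r) (hrn : r < n) {x z : Equiv.Perm (Fin n)} {E : List ℕ}
    (hzE : IsReducedWord n E z) (hrE : r ∉ E) (hx : PresA n r x) :
    ¬ bruhatLE n (x * simpleT n r) z := by
  intro h
  obtain ⟨V, hV, hVsub⟩ := bruhatLE_forall h E hzE
  have hrV : r ∉ V := fun hh => hrE (hVsub.subset hh)
  rw [isRed_iff] at hV
  exact not_presA_mul_t hr hrn hx (hV.1 ▸ presA_of_rfree hrV)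


variable {r : ℕ}

lemma transpPerm_valid {i j : ℕ} (h : 1 ≤ i ∧ i < j ∧ j ≤ n) :
    transpPerm n i j = Equiv.swap ⟨i - 1, by omega⟩ ⟨j - 1, by omega⟩ := by
  rw [transpPerm, dif_pos h]

lemma transpPerm_rr : (hr : 1 ≤ r) → (hrn : r < n) → transpPerm n r (r + 1) = simpleT n r := by
  intro hr hrn
  rw [transpPerm_valid ⟨hr, by omega, by omega⟩, simpleT_valid ⟨hr, hrn⟩]
  congr 1

lemma t_apply_idx (hr : 1 ≤ r) (hrn : r < n) {x : ℕ} (hx1 : 1 ≤ x) (hxn : x ≤ n) :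
    simpleT n r ⟨x - 1, by omega⟩ =
      ⟨srNat r x - 1, by simp only [srNat]; split_ifs <;> omega⟩ := by
  apply Fin.ext
  rw [simpleT_valid ⟨hr, hrn⟩]
  have hv := swap_val_adj (a := ⟨r - 1, by omega⟩) (b := ⟨r, hrn⟩)
    (by simp; omega) ⟨x - 1, by omega⟩
  rw [hv]
  simp only [srNat]
  split_ifs <;> omega

lemma srNat_bounds (hr : 1 ≤ r) (hrn : r < n) {q1 q2 : ℕ}
    (h1 : 1 ≤ q1) (h12 : q1 < q2) (h2 : q2 ≤ n) :
    1 ≤ min (srNat r q1) (srNat r q2) ∧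
      min (srNat r q1) (srNat r q2) < max (srNat r q1) (srNat r q2) ∧
      max (srNat r q1) (srNat r q2) ≤ n := by
  simp only [srNat]; split_ifs <;> omega

lemma srNat_pair_invol {q1 q2 : ℕ} (h12 : q1 < q2) :
    min (srNat r (min (srNat r q1) (srNat r q2))) (srNat r (max (srNat r q1) (srNat r q2)))
      = q1 ∧
    max (srNat r (min (srNat r q1) (srNat r q2))) (srNat r (max (srNat r q1) (srNat r q2)))
      = q2 := by
  simp only [srNat]; split_ifs <;> omega

lemma conj_transp (hr : 1 ≤ r) (hrn : r < n) {a b : ℕ}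
    (h1 : 1 ≤ a) (h12 : a < b) (h2 : b ≤ n) :
    simpleT n r * transpPerm n a b * simpleT n r =
      transpPerm n (min (srNat r a) (srNat r b)) (max (srNat r a) (srNat r b)) := by
  obtain ⟨hp1, hp12, hp2⟩ := srNat_bounds hr hrn h1 h12 h2
  rw [transpPerm_valid ⟨h1, h12, h2⟩, transpPerm_valid ⟨hp1, hp12, hp2⟩]
  have hinv : (simpleT n r)⁻¹ = simpleT n r := by
    rw [simpleT_valid ⟨hr, hrn⟩, Equiv.swap_inv]
  have hconj := Equiv.swap_apply_apply (simpleT n r) (⟨a - 1, by omega⟩ : Fin n)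
    (⟨b - 1, by omega⟩ : Fin n)
  rw [hinv] at hconj
  rw [← hconj, t_apply_idx hr hrn h1 (by omega), t_apply_idx hr hrn (by omega) h2]
  rcases le_total (srNat r a) (srNat r b) with hle | hle
  · congr 1 <;> exact Fin.ext (by simp; omega)
  · rw [Equiv.swap_comm]
    congr 1 <;> exact Fin.ext (by simp; omega)

lemma t_mul_transp (hr : 1 ≤ r) (hrn : r < n) {a b : ℕ}
    (h1 : 1 ≤ a) (h12 : a < b) (h2 : b ≤ n) :
    simpleT n r * transpPerm n a b =
      transpPerm n (min (srNat r a) (srNat r b)) (max (srNat r a) (srNat r b)) *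
        simpleT n r := by
  have h := conj_transp hr hrn h1 h12 h2
  have hss : simpleT n r * simpleT n r = 1 := by
    rw [simpleT_valid ⟨hr, hrn⟩, Equiv.swap_mul_self]
  calc simpleT n r * transpPerm n a b
      = simpleT n r * transpPerm n a b * simpleT n r * simpleT n r := by
        rw [mul_assoc _ (simpleT n r) (simpleT n r), hss, mul_one]
    _ = _ := by rw [h]

lemma transp_eq_t (hr : 1 ≤ r) (hrn : r < n) {q1 q2 : ℕ}
    (hq : 1 ≤ q1 ∧ q1 < q2 ∧ q2 ≤ n) (h : transpPerm n q1 q2 = simpleT n r) :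
    q1 = r ∧ q2 = r + 1 := by
  have happ := congrArg (fun f : Equiv.Perm (Fin n) => f ⟨q1 - 1, by omega⟩) h
  rw [transpPerm_valid hq, Equiv.swap_apply_left,
    t_apply_idx hr hrn hq.1 (by omega)] at happ
  have hv := congrArg Fin.val happ
  simp only at hv
  simp only [srNat] at hv
  split_ifs at hv <;> omega


lemma presA_of_red {r : ℕ} {E : List ℕ} {x : Equiv.Perm (Fin n)}
    (hE : IsReducedWord n E x) (hrE : r ∉ E) : PresA n r x := by
  rw [isRed_iff] at hE
  exact hE.1 ▸ presA_of_rfree hrE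

theorem main (n r : ℕ) (hr : 1 ≤ r) (hrn : r < n) (u v w : Equiv.Perm (Fin n))
    (hvu : bruhatLE n v u) (huw : bruhatLE n u w) (hw : r ∉ permSupp n w) :
    upperT n (u * simpleT n r) v (w * simpleT n r) =
      (fun p : ℕ × ℕ =>
        (min (srNat r p.1) (srNat r p.2), max (srNat r p.1) (srNat r p.2))) ''
          upperT n u v w ∧
    lowerT n (u * simpleT n r) v (w * simpleT n r) =
      (fun p : ℕ × ℕ =>
        (min (srNat r p.1) (srNat r p.2), max (srNat r p.1) (srNat r p.2))) ''
          lowerT n u v w ∪ {(r, r + 1)} := by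
  -- setup
  have hwB : ∀ B, IsReducedWord n B w → r ∉ B := by
    intro B hB hrB
    exact hw ⟨B, hB, hrB⟩
  obtain ⟨B, hB⟩ := exists_reduced (n := n) w
  have hrB : r ∉ B := hwB B hB
  obtain ⟨U, hU, hUsub⟩ := bruhatLE_forall huw B hB
  have hrU : r ∉ U := fun hh => hrB (hUsub.subset hh)
  obtain ⟨Vv, hVv, hVvsub⟩ := bruhatLE_forall hvu U hU
  have hrVv : r ∉ Vv := fun hh => hrU (hVvsub.subset hh)
  have hupres : PresA n r u := presA_of_red hU hrU
  have hvpres : PresA n r v := presA_of_red hVv hrVv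
  have hwpres : PresA n r w := presA_of_red hB hrB
  have hss : simpleT n r * simpleT n r = 1 := by
    rw [simpleT_valid ⟨hr, hrn⟩, Equiv.swap_mul_self]
  have htne : simpleT n r ≠ 1 := by
    intro hc
    have := congrArg (fun f : Equiv.Perm (Fin n) => (f ⟨r - 1, by omega⟩ : ℕ)) hc
    rw [simpleT_valid ⟨hr, hrn⟩] at this
    simp only [Equiv.swap_apply_left, Equiv.Perm.one_apply] at this
    have h2 : (r : ℕ) = r - 1 := by simpa using this
    omega
  have hlu : invCount n (u * simpleT n r) = invCount n u + 1 := len_mul_t hr hrn hupres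
  have hut_le_wt : bruhatLE n (u * simpleT n r) (w * simpleT n r) :=
    bruhat_mul_t_mono hr hrn hB hrB huw
  constructor
  · -- upper
    ext ⟨q1, q2⟩
    simp only [upperT, Set.mem_setOf_eq, Set.mem_image, Prod.mk.injEq, Prod.exists]
    constructor
    · rintro ⟨hq1, hq12, hq2n, hplt, hple, hplen⟩
      rcases master hr hrn hB hrB hple with ⟨E, hEz, hrE, _⟩ |
        ⟨x, E, hEx, hrE, hxw, hzx, hzlen⟩
      · exact absurd hplt.1 (not_mul_t_le hr hrn hEz hrE hupres)
      · have hxpres : PresA n r x := presA_of_red hEx hrE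
        have hkey : u * transpPerm n (min (srNat r q1) (srNat r q2))
            (max (srNat r q1) (srNat r q2)) = x := by
          apply mul_right_cancel (b := simpleT n r)
          rw [← hzx, mul_assoc, ← t_mul_transp hr hrn hq1 hq12 hq2n, ← mul_assoc]
        have hlex : bruhatLE n u x := by
          have := hplt.1
          rw [hzx] at this
          exact bruhat_of_mul_t hr hrn hEx hrE hupres this
        have hlz : invCount n (u * simpleT n r * transpPerm n q1 q2) =
            invCount n (u * simpleT n r) + 1 := by
          rw [← permLen_eq, ← permLen_eq, hplen]
        have hlx : invCount n x = invCount n u + 1 := by omega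
        obtain ⟨hb1, hb2, hb3⟩ := srNat_bounds hr hrn hq1 hq12 hq2n
        refine ⟨min (srNat r q1) (srNat r q2), max (srNat r q1) (srNat r q2),
          ⟨hb1, hb2, hb3, ⟨?_, ?_⟩, ?_, ?_⟩, ?_, ?_⟩
        · rw [hkey]; exact hlex
        · rw [hkey]
          intro hc
          rw [hc] at hlx
          omega
        · rw [hkey]; exact hxw
        · rw [hkey, permLen_eq, permLen_eq, hlx]
        · exact (srNat_pair_invol hq12).1
        · exact (srNat_pair_invol hq12).2
    · rintro ⟨p1, p2, ⟨hp1, hp12, hp2n, hplt, hple, hplen⟩, heq1, heq2⟩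
      obtain ⟨Ex, hEx, hExsub⟩ := bruhatLE_forall hple B hB
      have hrEx : r ∉ Ex := fun hh => hrB (hExsub.subset hh)
      have hxpres : PresA n r (u * transpPerm n p1 p2) := presA_of_red hEx hrEx
      have hlx : invCount n (u * transpPerm n p1 p2) = invCount n u + 1 := by
        rw [← permLen_eq, ← permLen_eq, hplen]
      have hkey : u * simpleT n r * transpPerm n q1 q2 =
          u * transpPerm n p1 p2 * simpleT n r := by
        rw [← heq1, ← heq2, ← conj_transp hr hrn hp1 hp12 hp2n]
        rw [mul_assoc u, ← mul_assoc (simpleT n r), ← mul_assoc (simpleT n r),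
          ← mul_assoc u, ← mul_assoc u, ← mul_assoc u]
        rw [mul_assoc u (simpleT n r) (simpleT n r), hss, mul_one]
      obtain ⟨hb1, hb2, hb3⟩ := srNat_bounds hr hrn hp1 hp12 hp2n
      have hltx : invCount n (u * transpPerm n p1 p2 * simpleT n r) =
          invCount n u + 2 := by
        rw [len_mul_t hr hrn hxpres, hlx]
      refine ⟨?_, ?_, ?_, ⟨?_, ?_⟩, ?_, ?_⟩
      · rw [← heq1]; exact hb1
      · rw [← heq1, ← heq2]; exact hb2
      · rw [← heq2]; exact hb3
      · rw [hkey]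
        exact bruhat_mul_t_mono hr hrn hEx hrEx hplt.1
      · rw [hkey]
        intro hc
        have := congrArg (invCount n) hc
        rw [hltx] at this
        omega
      · rw [hkey]
        exact bruhat_mul_t_mono hr hrn hB hrB hple
      · rw [hkey, permLen_eq, permLen_eq, hltx, hlu]
  · -- lower
    ext ⟨q1, q2⟩
    simp only [lowerT, Set.mem_setOf_eq, Set.mem_union, Set.mem_image,
      Set.mem_singleton_iff, Prod.mk.injEq, Prod.exists]
    constructor
    · rintro ⟨hq1, hq12, hq2n, hvle, hplt, hplen⟩
      have hz_le_wt : bruhatLE n (u * simpleT n r * transpPerm n q1 q2)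
          (w * simpleT n r) := bruhatLE_trans hplt.1 hut_le_wt
      have hlz : invCount n (u * simpleT n r * transpPerm n q1 q2) + 1 =
          invCount n (u * simpleT n r) := by
        rw [← permLen_eq, ← permLen_eq, hplen]
      rcases master hr hrn hB hrB hz_le_wt with ⟨E, hEz, hrE, _⟩ |
        ⟨x, E, hEx, hrE, hxw, hzx, hzlen⟩
      · -- z is r-free: z = u, q = (r, r+1)
        right
        have hzpres : PresA n r (u * simpleT n r * transpPerm n q1 q2) :=
          presA_of_red hEz hrE
        have hzu : bruhatLE n (u * simpleT n r * transpPerm n q1 q2) u :=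
          bruhat_of_le_mul_t hr hrn hU hrU hzpres hplt.1
        have hzequ : u * simpleT n r * transpPerm n q1 q2 = u :=
          bruhatLE_eq_of_len hzu (by omega)
        have htq : transpPerm n q1 q2 = simpleT n r := by
          have h2 : u * (simpleT n r * transpPerm n q1 q2) = u * 1 := by
            rw [← mul_assoc, hzequ, mul_one]
          have h3 := mul_left_cancel h2
          calc transpPerm n q1 q2 = simpleT n r * (simpleT n r * transpPerm n q1 q2) := by
                rw [← mul_assoc, hss, one_mul]
            _ = simpleT n r := by rw [h3, mul_one]
        have := transp_eq_t hr hrn ⟨hq1, hq12, hq2n⟩ htq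
        exact ⟨this.1, this.2⟩
      · left
        have hxpres : PresA n r x := presA_of_red hEx hrE
        have hkey : u * transpPerm n (min (srNat r q1) (srNat r q2))
            (max (srNat r q1) (srNat r q2)) = x := by
          apply mul_right_cancel (b := simpleT n r)
          rw [← hzx, mul_assoc, ← t_mul_transp hr hrn hq1 hq12 hq2n, ← mul_assoc]
        have hvx : bruhatLE n v x := by
          rw [hzx] at hvle
          exact bruhat_of_le_mul_t hr hrn hEx hrE hvpres hvle
        have hxu : bruhatLE n x u := by
          have := hplt.1
          rw [hzx] at this
          exact bruhat_of_mul_t hr hrn hU hrU hxpres this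
        have hlx : invCount n x + 1 = invCount n u := by omega
        obtain ⟨hb1, hb2, hb3⟩ := srNat_bounds hr hrn hq1 hq12 hq2n
        refine ⟨min (srNat r q1) (srNat r q2), max (srNat r q1) (srNat r q2),
          ⟨hb1, hb2, hb3, ?_, ⟨?_, ?_⟩, ?_⟩, ?_, ?_⟩
        · rw [hkey]; exact hvx
        · rw [hkey]; exact hxu
        · rw [hkey]
          intro hc
          rw [hc] at hlx
          omega
        · rw [hkey, permLen_eq, permLen_eq, hlx]
        · exact (srNat_pair_invol hq12).1
        · exact (srNat_pair_invol hq12).2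
    · rintro (⟨p1, p2, ⟨hp1, hp12, hp2n, hpvle, hplt, hplen⟩, heq1, heq2⟩ | ⟨hqr1, hqr2⟩)
      · obtain ⟨Ex, hEx, hExsub⟩ :=
          bruhatLE_forall (bruhatLE_trans hplt.1 huw) B hB
        have hrEx : r ∉ Ex := fun hh => hrB (hExsub.subset hh)
        have hxpres : PresA n r (u * transpPerm n p1 p2) := presA_of_red hEx hrEx
        have hlx : invCount n (u * transpPerm n p1 p2) + 1 = invCount n u := by
          rw [← permLen_eq, ← permLen_eq, hplen]
        have hkey : u * simpleT n r * transpPerm n q1 q2 =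
            u * transpPerm n p1 p2 * simpleT n r := by
          rw [← heq1, ← heq2, ← conj_transp hr hrn hp1 hp12 hp2n]
          rw [mul_assoc u, ← mul_assoc (simpleT n r), ← mul_assoc (simpleT n r),
            ← mul_assoc u, ← mul_assoc u, ← mul_assoc u]
          rw [mul_assoc u (simpleT n r) (simpleT n r), hss, mul_one]
        obtain ⟨hb1, hb2, hb3⟩ := srNat_bounds hr hrn hp1 hp12 hp2n
        have hltx : invCount n (u * transpPerm n p1 p2 * simpleT n r) =
            invCount n u := by
          rw [len_mul_t hr hrn hxpres]
          omega
        refine ⟨?_, ?_, ?_, ?_, ⟨?_, ?_⟩, ?_⟩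
        · rw [← heq1]; exact hb1
        · rw [← heq1, ← heq2]; exact hb2
        · rw [← heq2]; exact hb3
        · rw [hkey]
          exact bruhatLE_trans hpvle (le_mul_t_self hr hrn hEx hrEx)
        · rw [hkey]
          exact bruhat_mul_t_mono hr hrn hU hrU hplt.1
        · rw [hkey]
          intro hc
          have := congrArg (invCount n) hc
          rw [hltx, hlu] at this
          omega
        · rw [hkey, permLen_eq, permLen_eq, hltx, hlu]
      · -- the pair (r, r+1)
        rw [hqr1, hqr2]
        have htq : transpPerm n r (r + 1) = simpleT n r := transpPerm_rr hr hrn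
        have hzu : u * simpleT n r * transpPerm n r (r + 1) = u := by
          rw [htq, mul_assoc, hss, mul_one]
        refine ⟨hr, by omega, by omega, ?_, ⟨?_, ?_⟩, ?_⟩
        · rw [hzu]; exact hvu
        · rw [hzu]; exact le_mul_t_self hr hrn hU hrU
        · rw [hzu]
          intro hc
          have := congrArg (invCount n) hc
          rw [hlu] at this
          omega
        · rw [hzu, permLen_eq, permLen_eq, hlu]

end S15

/-- For `v ≤ u ≤ w` and `s_r ∉ supp(w)`:
`T̄(u s_r,[v, w s_r]) = {(s_r(i), s_r(j)) : (i,j) ∈ T̄(u,[v,w])}` and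
`T̲(u s_r,[v, w s_r]) = {(s_r(i), s_r(j)) : (i,j) ∈ T̲(u,[v,w])} ∪ {(r, r+1)}`,
where each pair `(s_r(i), s_r(j))` is written in increasing order. -/
theorem stmt15 (n r : ℕ) (hr : 1 ≤ r) (hrn : r < n) (u v w : Equiv.Perm (Fin n))
    (hvu : bruhatLE n v u) (huw : bruhatLE n u w) (hw : r ∉ permSupp n w) :
    upperT n (u * simpleT n r) v (w * simpleT n r) =
      (fun p : ℕ × ℕ =>
        (min (srNat r p.1) (srNat r p.2), max (srNat r p.1) (srNat r p.2))) ''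
          upperT n u v w ∧
    lowerT n (u * simpleT n r) v (w * simpleT n r) =
      (fun p : ℕ × ℕ =>
        (min (srNat r p.1) (srNat r p.2), max (srNat r p.1) (srNat r p.2))) ''
          lowerT n u v w ∪ {(r, r + 1)} := by
  exact S15.main n r hr hrn u v w hvu huw hw
end
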